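/- arXiv:1302.7235 — 3 statements merged into one kernel-verified Lean document; each statement's English description precedes it below -/
import Mathlib

section
/- (Kantorovich majorant principle) Suppose K(t,s,x) is continuous in its arguments, and suppose |K(t,s,x)| ≤ m(s)γ(|x|) and |∂K/∂x(t,s,x)| ≤ m(s)γ'(|x|) for continuous positive increasing m and convex increasing differentiable γ with γ(0)>0 and ∫₀^∞ dy/γ(y) = ∞. Then the Picard iterates x₀ ≡ 0, xₙ(t) = ∫₀ᵗ K(t,s,x_{n-1}(s)) ds converge uniformly on every compact interval [0,T₁] to a continuous function x on [0,∞) satisfying x(t) = ∫₀ᵗ K(t,s,x(s)) ds, and |x(t)| ≤ x̂(t) for all t ≥ 0, where x̂ solves x̂' = m(t)γ(x̂), x̂(0)=0. -/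
open Set Filter intervalIntegral

/-- Picard iterates for the integral equation x(t) = ∫₀ᵗ K(t,s,x(s)) ds. -/
noncomputable def picardK (K : ℝ → ℝ → ℝ → ℝ) : ℕ → ℝ → ℝ
  | 0 => fun _ => 0
  | n + 1 => fun t => ∫ s in (0:ℝ)..t, K t s (picardK K n s)

/-- Kantorovich majorant principle / Theorem 1: under conditions
(A), (B) with ∫₀^∞ dy/γ(y) = ∞, the Picard iterates converge uniformly on
compacts to a continuous main solution x on [0,∞), and |x(t)| ≤ xh(t) where
xh solves the majorant Cauchy problem xh' = m γ(xh), xh(0) = 0. -/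
theorem stmt5 (K K' : ℝ → ℝ → ℝ → ℝ) (m γ γ' : ℝ → ℝ)
    (hKc : ContinuousOn (fun p : ℝ × ℝ × ℝ => K p.1 p.2.1 p.2.2)
      {p : ℝ × ℝ × ℝ | 0 ≤ p.2.1 ∧ p.2.1 ≤ p.1})
    (hKd : ∀ t s x : ℝ, 0 ≤ s → s ≤ t → HasDerivAt (fun y => K t s y) (K' t s x) x)
    (hmc : Continuous m) (hmpos : ∀ s ∈ Ici (0:ℝ), 0 < m s)
    (hmmono : MonotoneOn m (Ici (0:ℝ)))
    (hγc : Continuous γ) (hγpos : ∀ x ∈ Ici (0:ℝ), 0 < γ x)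
    (hγmono : MonotoneOn γ (Ici (0:ℝ))) (hγconv : ConvexOn ℝ (Ici (0:ℝ)) γ)
    (hγd : ∀ x ∈ Ici (0:ℝ), HasDerivAt γ (γ' x) x) (hγ0 : 0 < γ 0)
    (hbound : ∀ t s x : ℝ, 0 ≤ s → s ≤ t → |K t s x| ≤ m s * γ |x|)
    (hbound' : ∀ t s x : ℝ, 0 ≤ s → s ≤ t → |K' t s x| ≤ m s * γ' |x|)
    (hdiv : Tendsto (fun x => ∫ y in (0:ℝ)..x, 1 / γ y) atTop atTop) :
    ∃ x : ℝ → ℝ, ContinuousOn x (Ici (0:ℝ)) ∧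
      (∀ t ∈ Ici (0:ℝ), x t = ∫ s in (0:ℝ)..t, K t s (x s)) ∧
      (∀ T₁ > (0:ℝ), TendstoUniformlyOn (fun n => picardK K n) x atTop (Icc 0 T₁)) ∧
      ∃ xh : ℝ → ℝ, xh 0 = 0 ∧
        (∀ t ∈ Ici (0:ℝ), HasDerivAt xh (m t * γ (xh t)) t) ∧
        (∀ t ∈ Ici (0:ℝ), |x t| ≤ xh t) := by
  -- ## basic facts about γ'
  have hγ'nonneg : ∀ y : ℝ, 0 ≤ y → 0 ≤ γ' y := by
    intro y hy
    have h1 := (abs_nonneg (K' 0 0 y)).trans (hbound' 0 0 y le_rfl le_rfl)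
    rw [abs_of_nonneg hy] at h1
    nlinarith [hmpos 0 Set.self_mem_Ici]
  have hγ'mono : ∀ a b : ℝ, 0 ≤ a → a ≤ b → γ' a ≤ γ' b := by
    intro a b ha hab
    rcases eq_or_lt_of_le hab with rfl | h
    · exact le_rfl
    · have hb : (0:ℝ) ≤ b := ha.trans hab
      have h1 := hγconv.le_slope_of_hasDerivAt ha hb h (hγd a ha)
      have h2 := hγconv.slope_le_of_hasDerivAt ha hb h (hγd b hb)
      exact h1.trans h2
  -- ## extended data
  set γt : ℝ → ℝ := fun x => γ (max x 0) with hγtdef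
  set mt : ℝ → ℝ := fun s => m (max s 0) with hmtdef
  have hγtc : Continuous γt := hγc.comp (continuous_id.max continuous_const)
  have hmtc : Continuous mt := hmc.comp (continuous_id.max continuous_const)
  have hγtpos : ∀ x, 0 < γt x := fun x => hγpos _ (le_max_right x 0)
  have hmtpos : ∀ s, 0 < mt s := fun s => hmpos _ (le_max_right s 0)
  have hγteq : ∀ x : ℝ, 0 ≤ x → γt x = γ x := fun x hx => by
    simp only [hγtdef, max_eq_left hx]
  have hmteq : ∀ s : ℝ, 0 ≤ s → mt s = m s := fun s hs => by
    simp only [hmtdef, max_eq_left hs]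
  -- ## construction of the majorant solution xh
  set G : ℝ → ℝ := fun u => ∫ y in (0:ℝ)..u, (γt y)⁻¹ with hGdef
  have hinvc : Continuous fun y => (γt y)⁻¹ := hγtc.inv₀ fun y => (hγtpos y).ne'
  have hGd : ∀ u, HasDerivAt G (γt u)⁻¹ u := fun u =>
    (hinvc.integral_hasStrictDerivAt 0 u).hasDerivAt
  have hGc : Continuous G := continuous_iff_continuousAt.2 fun u => (hGd u).continuousAt
  have hGsm : StrictMono G := by
    apply strictMono_of_deriv_pos
    intro u
    rw [(hGd u).deriv]
    exact inv_pos.2 (hγtpos u)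
  have hGtop : Tendsto G atTop atTop := by
    apply hdiv.congr'
    filter_upwards [eventually_ge_atTop (0:ℝ)] with u hu
    apply intervalIntegral.integral_congr
    intro y hy
    rw [uIcc_of_le hu] at hy
    show 1 / γ y = (γt y)⁻¹
    rw [hγteq y hy.1, one_div]
  have hGbot : Tendsto G atBot atBot := by
    have hbotEq : ∀ᶠ u in atBot, G u = u * (γ 0)⁻¹ := by
      filter_upwards [eventually_le_atBot (0:ℝ)] with u hu
      have : G u = ∫ y in (0:ℝ)..u, (γ 0)⁻¹ := by
        apply intervalIntegral.integral_congr
        intro y hy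
        rw [uIcc_of_ge hu] at hy
        simp only [hγtdef, max_eq_right hy.2]
      rw [this, intervalIntegral.integral_const, smul_eq_mul, sub_zero]
    exact Filter.Tendsto.congr' (EventuallyEq.symm hbotEq)
      (tendsto_id.atBot_mul_const (inv_pos.2 hγ0))
  have hGsurj : Function.Surjective G := hGc.surjective hGtop hGbot
  set e : ℝ ≃o ℝ := StrictMono.orderIsoOfSurjective G hGsm hGsurj with hedef
  have happ : ∀ u, e u = G u := fun u => rfl
  have hsymmG : ∀ u, e.symm (G u) = u := fun u => e.symm_apply_apply u
  have hGsymm : ∀ y, G (e.symm y) = y := fun y => e.apply_symm_apply y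
  have hec : Continuous fun y => (e.symm y : ℝ) := e.symm.continuous
  have hed : ∀ y, HasDerivAt (fun z => (e.symm z : ℝ)) (γt (e.symm y)) y := by
    intro y
    have h := HasDerivAt.of_local_left_inverse (hec.continuousAt)
      (hGd (e.symm y)) (inv_ne_zero (hγtpos _).ne') (Eventually.of_forall hGsymm)
    rwa [inv_inv] at h
  set M : ℝ → ℝ := fun t => ∫ s in (0:ℝ)..t, mt s with hMdef
  have hMd : ∀ t, HasDerivAt M (mt t) t := fun t =>
    (hmtc.integral_hasStrictDerivAt 0 t).hasDerivAt
  have hM0 : M 0 = 0 := intervalIntegral.integral_same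
  have hMsm : StrictMono M := by
    apply strictMono_of_deriv_pos
    intro t; rw [(hMd t).deriv]; exact hmtpos t
  set xh : ℝ → ℝ := fun t => (e.symm (M t) : ℝ) with hxhdef
  have hxh0 : xh 0 = 0 := by
    have hG0 : G 0 = 0 := intervalIntegral.integral_same
    have h2 := hsymmG 0
    rw [hG0] at h2
    show (e.symm (M 0) : ℝ) = 0
    rw [hM0]
    exact h2
  have hxhd : ∀ t, HasDerivAt xh (γt (xh t) * mt t) t := fun t =>
    (hed (M t)).comp t (hMd t)
  have hxhc : Continuous xh := continuous_iff_continuousAt.2 fun t => (hxhd t).continuousAt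
  have hxhmono : Monotone xh := fun a b hab =>
    e.symm.monotone (hMsm.monotone hab)
  have hxhnn : ∀ t : ℝ, 0 ≤ t → 0 ≤ xh t := by
    intro t ht
    have := hxhmono ht
    rwa [hxh0] at this
  have hxhd' : ∀ t ∈ Ici (0:ℝ), HasDerivAt xh (m t * γ (xh t)) t := by
    intro t ht
    have h := hxhd t
    rwa [hγteq _ (hxhnn t ht), hmteq _ ht, mul_comm] at h
  have hmγxhc : Continuous fun s => m s * γ (xh s) := hmc.mul (hγc.comp hxhc)
  have hxhint : ∀ t : ℝ, 0 ≤ t → xh t = ∫ s in (0:ℝ)..t, m s * γ (xh s) := by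
    intro t ht
    have h1 : ∫ s in (0:ℝ)..t, γt (xh s) * mt s = xh t - xh 0 := by
      apply intervalIntegral.integral_eq_sub_of_hasDerivAt (fun s _ => hxhd s)
      exact ((hγtc.comp hxhc).mul hmtc).intervalIntegrable 0 t
    rw [hxh0, sub_zero] at h1
    rw [← h1]
    apply intervalIntegral.integral_congr
    intro s hs
    rw [uIcc_of_le ht] at hs
    show γt (xh s) * mt s = m s * γ (xh s)
    rw [hγteq _ (hxhnn s hs.1), hmteq _ hs.1, mul_comm]
  -- ## Tietze extension of K
  obtain ⟨Kt, hKtc, hKtK⟩ : ∃ Kt : ℝ → ℝ → ℝ → ℝ,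
      Continuous (fun p : ℝ × ℝ × ℝ => Kt p.1 p.2.1 p.2.2) ∧
      ∀ t s y : ℝ, 0 ≤ s → s ≤ t → Kt t s y = K t s y := by
    set S : Set (ℝ × ℝ × ℝ) := {p : ℝ × ℝ × ℝ | 0 ≤ p.2.1 ∧ p.2.1 ≤ p.1} with hSdef
    have hSclosed : IsClosed S := by
      apply IsClosed.inter
      · exact isClosed_le continuous_const (continuous_fst.comp continuous_snd)
      · exact isClosed_le (continuous_fst.comp continuous_snd) continuous_fst
    obtain ⟨g, hg⟩ := ContinuousMap.exists_restrict_eq hSclosed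
      ⟨S.restrict (fun p : ℝ × ℝ × ℝ => K p.1 p.2.1 p.2.2), hKc.restrict⟩
    refine ⟨fun t s y => g (t, s, y), by fun_prop, ?_⟩
    intro t s y hs hst
    have := DFunLike.congr_fun hg (⟨(t, s, y), hs, hst⟩ : S)
    exact this
  -- ## the Picard iterates for the extended kernel
  set p : ℕ → ℝ → ℝ := picardK Kt with hpdef
  have hpsucc : ∀ n t, p (n + 1) t = ∫ s in (0:ℝ)..t, Kt t s (p n s) := fun n t => rfl
  have hp0 : ∀ t, p 0 t = 0 := fun t => rfl
  have pcont : ∀ n, Continuous (p n) := by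
    intro n
    induction n with
    | zero => exact continuous_const
    | succ n ih =>
      have : Continuous (Function.uncurry fun t s => Kt t s (p n s)) := by
        have : Continuous fun q : ℝ × ℝ => (q.1, q.2, p n q.2) := by fun_prop
        exact hKtc.comp this
      exact intervalIntegral.continuous_parametric_intervalIntegral_of_continuous
        this continuous_id
  have hKscont : ∀ (f : ℝ → ℝ), Continuous f → ∀ t : ℝ,
      Continuous fun s => Kt t s (f s) := by
    intro f hf t
    have : Continuous fun s : ℝ => ((t : ℝ), s, f s) := by fun_prop
    exact hKtc.comp this
  have peq : ∀ n, EqOn (picardK K n) (p n) (Ici (0:ℝ)) := by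
    intro n
    induction n with
    | zero => intro t _; rfl
    | succ n ih =>
      intro t ht
      show (∫ s in (0:ℝ)..t, K t s (picardK K n s)) = ∫ s in (0:ℝ)..t, Kt t s (p n s)
      apply intervalIntegral.integral_congr
      intro s hs
      rw [uIcc_of_le (mem_Ici.1 ht)] at hs
      show K t s (picardK K n s) = Kt t s (p n s)
      rw [ih hs.1, hKtK t s _ hs.1 hs.2]
  have pbound : ∀ n t, 0 ≤ t → |p n t| ≤ xh t := by
    intro n
    induction n with
    | zero => intro t ht; rw [hp0, abs_zero]; exact hxhnn t ht
    | succ n ih =>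
      intro t ht
      rw [hpsucc]
      calc |∫ s in (0:ℝ)..t, Kt t s (p n s)|
          ≤ ∫ s in (0:ℝ)..t, |Kt t s (p n s)| :=
            intervalIntegral.abs_integral_le_integral_abs ht
        _ ≤ ∫ s in (0:ℝ)..t, m s * γ (xh s) := by
            apply intervalIntegral.integral_mono_on ht
            · exact ((hKscont (p n) (pcont n) t).abs).intervalIntegrable 0 t
            · exact hmγxhc.intervalIntegrable 0 t
            · intro s hs
              rw [hKtK t s _ hs.1 hs.2]
              refine (hbound t s _ hs.1 hs.2).trans ?_
              have h1 : γ |p n s| ≤ γ (xh s) :=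
                hγmono (mem_Ici.2 (abs_nonneg _)) (hxhnn s hs.1) (ih s hs.1)
              exact mul_le_mul_of_nonneg_left h1 (hmpos s hs.1).le
        _ = xh t := (hxhint t ht).symm
  -- ## Lipschitz estimate
  have hLip : ∀ T : ℝ, 0 ≤ T → ∀ t s a b : ℝ, 0 ≤ s → s ≤ t → s ≤ T →
      |a| ≤ xh T → |b| ≤ xh T →
      |K t s a - K t s b| ≤ (m T * γ' (xh T)) * |a - b| := by
    intro T hT t s a b hs hst hsT ha hb
    set B := xh T with hB
    have hBnn : 0 ≤ B := hxhnn T hT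
    have key := (convex_Icc (-B) B).norm_image_sub_le_of_norm_hasDerivWithin_le
      (f := fun y => K t s y) (f' := fun z => K' t s z) (C := m T * γ' B)
      (fun z _ => (hKd t s z hs hst).hasDerivWithinAt) ?_ (abs_le.1 hb) (abs_le.1 ha)
    · simpa [Real.norm_eq_abs] using key
    · intro z hz
      rw [Real.norm_eq_abs]
      refine (hbound' t s z hs hst).trans ?_
      have h1 : γ' |z| ≤ γ' B := hγ'mono _ _ (abs_nonneg z) (abs_le.2 ⟨hz.1, hz.2⟩)
      have h2 : m s ≤ m T := hmmono hs hT hsT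
      have h3 : 0 ≤ γ' |z| := hγ'nonneg _ (abs_nonneg z)
      nlinarith [hmpos s hs, hmpos T hT]
  -- ## main estimate
  have hEst : ∀ T : ℝ, 0 ≤ T → ∀ n, ∀ t ∈ Icc (0:ℝ) T,
      |p (n + 1) t - p n t| ≤
        xh T * ((m T * γ' (xh T)) ^ n * t ^ n / n.factorial) := by
    intro T hT n
    set B := xh T with hBdef
    set L := m T * γ' (xh T) with hLdef
    have hBnn : 0 ≤ B := hxhnn T hT
    have hLnn : 0 ≤ L := mul_nonneg (hmpos T hT).le (hγ'nonneg _ hBnn)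
    induction n with
    | zero =>
      intro t htt
      simp only [pow_zero, Nat.factorial_zero, Nat.cast_one, mul_one, one_mul, div_one]
      rw [hp0, sub_zero]
      exact (pbound 1 t htt.1).trans (hxhmono htt.2)
    | succ n ih =>
      intro t htt
      obtain ⟨ht0, htT⟩ := htt
      have hsub : p (n + 2) t - p (n + 1) t =
          ∫ s in (0:ℝ)..t, (Kt t s (p (n + 1) s) - Kt t s (p n s)) := by
        rw [hpsucc, hpsucc]
        rw [intervalIntegral.integral_sub
          ((hKscont _ (pcont (n+1)) t).intervalIntegrable 0 t)
          ((hKscont _ (pcont n) t).intervalIntegrable 0 t)]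
      rw [hsub]
      have hcont1 : Continuous fun s => Kt t s (p (n+1) s) - Kt t s (p n s) :=
        (hKscont _ (pcont (n+1)) t).sub (hKscont _ (pcont n) t)
      calc |∫ s in (0:ℝ)..t, (Kt t s (p (n + 1) s) - Kt t s (p n s))|
          ≤ ∫ s in (0:ℝ)..t, |Kt t s (p (n + 1) s) - Kt t s (p n s)| :=
            intervalIntegral.abs_integral_le_integral_abs ht0
        _ ≤ ∫ s in (0:ℝ)..t, (L * B * L ^ n / n.factorial) * s ^ n := by
            apply intervalIntegral.integral_mono_on ht0
            · exact hcont1.abs.intervalIntegrable 0 t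
            · exact (continuous_const.mul (continuous_pow n)).intervalIntegrable 0 t
            · intro s hs
              have hsT : s ≤ T := hs.2.trans htT
              rw [hKtK t s _ hs.1 hs.2, hKtK t s _ hs.1 hs.2]
              have h1 : |K t s (p (n+1) s) - K t s (p n s)| ≤
                  L * |p (n+1) s - p n s| := by
                apply hLip T hT t s _ _ hs.1 hs.2 hsT
                · exact (pbound (n+1) s hs.1).trans (hxhmono hsT)
                · exact (pbound n s hs.1).trans (hxhmono hsT)
              refine h1.trans ?_
              refine (mul_le_mul_of_nonneg_left (ih s ⟨hs.1, hsT⟩) hLnn).trans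
                (le_of_eq (by ring))
        _ = B * (L ^ (n+1) * t ^ (n+1) / (n+1).factorial) := by
            rw [intervalIntegral.integral_const_mul, integral_pow]
            have hfact : ((n+1).factorial : ℝ) = (n+1) * n.factorial := by
              rw [Nat.factorial_succ]; push_cast; ring
            have hne1 : ((n:ℝ) + 1) ≠ 0 := by positivity
            have hne2 : (n.factorial : ℝ) ≠ 0 := Nat.cast_ne_zero.2 n.factorial_ne_zero
            rw [hfact]
            field_simp
            ring
  -- ## uniform convergence
  set x : ℝ → ℝ := fun t => ∑' n, (p (n+1) t - p n t) with hxdef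
  have hUnif : ∀ T : ℝ, 0 ≤ T → TendstoUniformlyOn (fun n => p n) x atTop (Icc 0 T) := by
    intro T hT
    set B := xh T with hBdef
    set L := m T * γ' (xh T) with hLdef
    have hBnn : 0 ≤ B := hxhnn T hT
    have hLnn : 0 ≤ L := mul_nonneg (hmpos T hT).le (hγ'nonneg _ hBnn)
    have hu : Summable (fun n : ℕ => B * ((L * T) ^ n / n.factorial)) :=
      (Real.summable_pow_div_factorial (L * T)).mul_left B
    have hb : ∀ (n : ℕ), ∀ t ∈ Icc (0:ℝ) T,
        ‖p (n+1) t - p n t‖ ≤ B * ((L * T) ^ n / n.factorial) := by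
      intro n t ht
      rw [Real.norm_eq_abs]
      refine (hEst T hT n t ht).trans ?_
      rw [show (L * T) ^ n = L ^ n * T ^ n from mul_pow L T n]
      gcongr
      · exact ht.1
      · exact ht.2
    have h1 := tendstoUniformlyOn_tsum_nat hu hb
    apply h1.congr
    apply Eventually.of_forall
    intro n t ht
    show (∑ i ∈ Finset.range n, (p (i+1) t - p i t)) = p n t
    have h2 := Finset.sum_range_sub (fun k => p k t) n
    simpa [hp0] using h2
  have hxlim : ∀ t : ℝ, 0 ≤ t → Tendsto (fun n => p n t) atTop (nhds (x t)) := by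
    intro t ht
    exact (hUnif t ht).tendsto_at ⟨ht, le_rfl⟩
  have hxbound : ∀ t ∈ Ici (0:ℝ), |x t| ≤ xh t := by
    intro t ht
    have h1 : Tendsto (fun n => |p n t|) atTop (nhds |x t|) := (hxlim t ht).abs
    exact le_of_tendsto h1 (Eventually.of_forall fun n => pbound n t ht)
  have hxcont : ContinuousOn x (Ici (0:ℝ)) := by
    intro t ht
    have ht' : (0:ℝ) ≤ t := ht
    have h1 : ContinuousOn x (Icc (0:ℝ) (t+1)) :=
      (hUnif (t+1) (by linarith)).continuousOn
        (Frequently.of_forall fun n => (pcont n).continuousOn)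
    have h2 : Icc (0:ℝ) (t+1) ∈ nhdsWithin t (Ici 0) := by
      apply mem_nhdsWithin.2
      refine ⟨Iio (t+1), isOpen_Iio, by simp, ?_⟩
      intro y hy
      exact ⟨hy.2, hy.1.le⟩
    exact (h1 t ⟨ht', by linarith⟩).mono_of_mem_nhdsWithin h2
  have hxeq : ∀ t ∈ Ici (0:ℝ), x t = ∫ s in (0:ℝ)..t, K t s (x s) := by
    intro t ht
    have ht' : (0:ℝ) ≤ t := ht
    have hlim2 : Tendsto (fun n => ∫ s in (0:ℝ)..t, Kt t s (p n s)) atTop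
        (nhds (∫ s in (0:ℝ)..t, Kt t s (x s))) := by
      apply intervalIntegral.tendsto_integral_filter_of_dominated_convergence
        (bound := fun s => m s * γ (xh s))
      · exact Eventually.of_forall fun n =>
          (hKscont _ (pcont n) t).aestronglyMeasurable
      · apply Eventually.of_forall
        intro n
        apply Eventually.of_forall
        intro s hs
        rw [uIoc_of_le ht'] at hs
        rw [Real.norm_eq_abs, hKtK t s _ hs.1.le hs.2]
        refine (hbound t s _ hs.1.le hs.2).trans ?_
        exact mul_le_mul_of_nonneg_left
          (hγmono (mem_Ici.2 (abs_nonneg _)) (hxhnn s hs.1.le) (pbound n s hs.1.le))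
          (hmpos s hs.1.le).le
      · exact hmγxhc.intervalIntegrable 0 t
      · apply Eventually.of_forall
        intro s hs
        rw [uIoc_of_le ht'] at hs
        have h3 : Tendsto (fun n => p n s) atTop (nhds (x s)) := hxlim s hs.1.le
        have h4 : Continuous fun y : ℝ => Kt t s y :=
          hKtc.comp (by fun_prop : Continuous fun y : ℝ => ((t:ℝ), s, y))
        exact (h4.tendsto (x s)).comp h3
    have hlim1 : Tendsto (fun n => p (n+1) t) atTop (nhds (x t)) :=
      (hxlim t ht').comp (tendsto_add_atTop_nat 1)
    have h5 : x t = ∫ s in (0:ℝ)..t, Kt t s (x s) :=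
      tendsto_nhds_unique hlim1 (by simpa only [hpsucc] using hlim2)
    rw [h5]
    apply intervalIntegral.integral_congr
    intro s hs
    rw [uIcc_of_le ht'] at hs
    show Kt t s (x s) = K t s (x s)
    exact hKtK t s _ hs.1 hs.2
  refine ⟨x, hxcont, hxeq, ?_, xh, hxh0, hxhd', hxbound⟩
  intro T₁ hT₁
  apply (hUnif T₁ hT₁.le).congr
  apply Eventually.of_forall
  intro n t htm
  exact (peq n (mem_Ici.2 htm.1)).symm
end

section
/- The integral equation x(t) = ∫₀ᵗ (K₂(t,s)x(s)² + K₁(t,s)x(s) + K₀(t,s)) s² ds, where sup_{0≤s≤t} |Kᵢ(t,s)| ≤ 1 for i = 0,1,2, has a continuous solution x on [0,1] with ‖x‖_{C[0,1]} ≤ 1, obtained as the uniform limit of the Picard iterates starting from x₀ ≡ 0. -/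
open Set Filter intervalIntegral
open Topology

noncomputable def gfun (A B C : ℝ → ℝ → ℝ) (t s y : ℝ) : ℝ :=
  (A t s * y ^ 2 + B t s * y + C t s) * s ^ 2

section aux

variable {A B C : ℝ → ℝ → ℝ}
  (hA : Continuous fun p : ℝ × ℝ => A p.1 p.2)
  (hB : Continuous fun p : ℝ × ℝ => B p.1 p.2)
  (hC : Continuous fun p : ℝ × ℝ => C p.1 p.2)
  (hbA : ∀ t s, |A t s| ≤ 1) (hbB : ∀ t s, |B t s| ≤ 1) (hbC : ∀ t s, |C t s| ≤ 1)

include hbA hbB hbC in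
lemma gbound {t s y : ℝ} (hy : |y| ≤ 1) : |gfun A B C t s y| ≤ 3 * s ^ 2 := by
  unfold gfun
  have h1 := hbA t s; have h2 := hbB t s; have h3 := hbC t s
  have hin : |A t s * y ^ 2 + B t s * y + C t s| ≤ 3 := by
    calc |A t s * y ^ 2 + B t s * y + C t s|
        ≤ |A t s * y ^ 2| + |B t s * y| + |C t s| := abs_add_three _ _ _
      _ = |A t s| * |y| ^ 2 + |B t s| * |y| + |C t s| := by
          rw [abs_mul, abs_mul, abs_pow]
      _ ≤ 3 := by nlinarith [abs_nonneg y, abs_nonneg (A t s), abs_nonneg (B t s)]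
  rw [abs_mul, abs_pow, sq_abs]
  nlinarith [sq_nonneg s, abs_nonneg (A t s * y ^ 2 + B t s * y + C t s)]

include hbA hbB in
lemma glip {t s y z : ℝ} (hy : |y| ≤ 1) (hz : |z| ≤ 1) :
    |gfun A B C t s y - gfun A B C t s z| ≤ 3 * s ^ 2 * |y - z| := by
  unfold gfun
  have h : (A t s * y ^ 2 + B t s * y + C t s) * s ^ 2
      - (A t s * z ^ 2 + B t s * z + C t s) * s ^ 2
      = ((A t s * (y + z) + B t s) * (y - z)) * s ^ 2 := by ring
  rw [h, abs_mul, abs_mul, abs_pow, sq_abs]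
  have hfac : |A t s * (y + z) + B t s| ≤ 3 := by
    calc |A t s * (y + z) + B t s| ≤ |A t s * (y + z)| + |B t s| := abs_add_le _ _
      _ = |A t s| * |y + z| + |B t s| := by rw [abs_mul]
      _ ≤ 1 * (|y| + |z|) + 1 := by
          have habs := abs_add_le y z
          have h1 := hbA t s; have h2 := hbB t s
          have := mul_le_mul h1 habs (abs_nonneg _) zero_le_one
          linarith
      _ ≤ 3 := by linarith
  rw [show (3:ℝ) * s ^ 2 * |y - z| = 3 * |y - z| * s ^ 2 by ring]
  exact mul_le_mul_of_nonneg_right (mul_le_mul_of_nonneg_right hfac (abs_nonneg _)) (sq_nonneg s)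

include hA hB hC in
lemma picard_cont : ∀ n, Continuous (picardK (gfun A B C) n) := by
  intro n
  induction n with
  | zero => exact continuous_const
  | succ n ih =>
      show Continuous fun t => ∫ s in (0:ℝ)..t, gfun A B C t s (picardK (gfun A B C) n s)
      apply intervalIntegral.continuous_parametric_intervalIntegral_of_continuous
        (f := fun t s => gfun A B C t s (picardK (gfun A B C) n s)) _ continuous_id
      show Continuous fun p : ℝ × ℝ =>
        (A p.1 p.2 * (picardK (gfun A B C) n p.2) ^ 2 + B p.1 p.2 * (picardK (gfun A B C) n p.2)
          + C p.1 p.2) * p.2 ^ 2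
      exact (((hA.mul ((ih.comp continuous_snd).pow 2)).add
        (hB.mul (ih.comp continuous_snd))).add hC).mul (continuous_snd.pow 2)

lemma key_int_bound (c : ℝ) (k : ℕ) {t : ℝ} (ht : 0 ≤ t) {h : ℝ → ℝ} (hcont : Continuous h)
    (hb : ∀ s ∈ Icc 0 t, |h s| ≤ c * s ^ k) :
    |∫ s in (0:ℝ)..t, h s| ≤ c * t ^ (k + 1) / (k + 1) := by
  have h1 : |∫ s in (0:ℝ)..t, h s| ≤ ∫ s in (0:ℝ)..t, |h s| :=
    intervalIntegral.abs_integral_le_integral_abs ht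
  have h2 : (∫ s in (0:ℝ)..t, |h s|) ≤ ∫ s in (0:ℝ)..t, c * s ^ k := by
    apply intervalIntegral.integral_mono_on ht (hcont.abs.intervalIntegrable _ _)
      ((continuous_const.mul (continuous_pow k)).intervalIntegrable _ _)
    exact hb
  have h3 : (∫ s in (0:ℝ)..t, c * s ^ k) = c * t ^ (k + 1) / (k + 1) := by
    rw [intervalIntegral.integral_const_mul, integral_pow]
    simp [zero_pow, Nat.succ_ne_zero]
    ring
  linarith

include hA hB hC hbA hbB hbC in
lemma picard_bound : ∀ n, ∀ t : ℝ, 0 ≤ t → t ≤ 1 → |picardK (gfun A B C) n t| ≤ t ^ 3 := by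
  intro n
  induction n with
  | zero =>
      intro t ht ht1
      show |(0:ℝ)| ≤ t ^ 3
      simpa using pow_nonneg ht 3
  | succ n ih =>
      intro t ht ht1
      show |∫ s in (0:ℝ)..t, gfun A B C t s (picardK (gfun A B C) n s)| ≤ t ^ 3
      have hcont : Continuous fun s => gfun A B C t s (picardK (gfun A B C) n s) := by
        have hpc := picard_cont hA hB hC n
        unfold gfun
        fun_prop
      have := key_int_bound 3 2 ht hcont (fun s hs => by
        have hs1 : s ≤ 1 := le_trans hs.2 ht1
        have hys : |picardK (gfun A B C) n s| ≤ 1 := by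
          calc |picardK (gfun A B C) n s| ≤ s ^ 3 := ih s hs.1 hs1
            _ ≤ 1 := pow_le_one₀ hs.1 hs1
        exact gbound hbA hbB hbC hys)
      calc |∫ s in (0:ℝ)..t, gfun A B C t s (picardK (gfun A B C) n s)|
          ≤ 3 * t ^ (2 + 1) / (2 + 1) := this
        _ = t ^ 3 := by norm_num

include hA hB hC hbA hbB hbC in
lemma picard_diff : ∀ n, ∀ t : ℝ, 0 ≤ t → t ≤ 1 →
    |picardK (gfun A B C) (n + 1) t - picardK (gfun A B C) n t|
      ≤ t ^ (3 * (n + 1)) / ((n+1).factorial : ℝ) := by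
  intro n
  induction n with
  | zero =>
      intro t ht ht1
      show |(∫ s in (0:ℝ)..t, gfun A B C t s 0) - 0| ≤ t ^ (3 * 1) / ((Nat.factorial 1 : ℕ) : ℝ)
      rw [sub_zero]
      have hcont : Continuous fun s => gfun A B C t s 0 := by
        unfold gfun; fun_prop
      have := key_int_bound 3 2 ht hcont (fun s hs =>
        gbound hbA hbB hbC (by simp : |(0:ℝ)| ≤ 1))
      have h3 : (3:ℝ) * t ^ (2+1) / (2+1) = t ^ 3 := by norm_num
      calc |∫ s in (0:ℝ)..t, gfun A B C t s 0| ≤ 3 * t ^ (2+1) / (2+1) := this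
        _ = t ^ (3 * 1) / ((Nat.factorial 1 : ℕ) : ℝ) := by norm_num [Nat.factorial]
  | succ n ih =>
      intro t ht ht1
      have hpc := picard_cont hA hB hC
      have hcontn : Continuous fun s => gfun A B C t s (picardK (gfun A B C) n s) := by
        have := hpc n; unfold gfun; fun_prop
      have hcontn1 : Continuous fun s => gfun A B C t s (picardK (gfun A B C) (n+1) s) := by
        have := hpc (n+1); unfold gfun; fun_prop
      have heq : picardK (gfun A B C) (n + 2) t - picardK (gfun A B C) (n + 1) t
          = ∫ s in (0:ℝ)..t, (gfun A B C t s (picardK (gfun A B C) (n+1) s)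
              - gfun A B C t s (picardK (gfun A B C) n s)) := by
        rw [intervalIntegral.integral_sub (hcontn1.intervalIntegrable _ _)
          (hcontn.intervalIntegrable _ _)]
        rfl
      rw [heq]
      have hkey := key_int_bound (3 / ((n+1).factorial : ℝ)) (3 * (n+1) + 2) ht
        (hcontn1.sub hcontn) (fun s hs => by
          have hs1 : s ≤ 1 := le_trans hs.2 ht1
          have hy : |picardK (gfun A B C) (n+1) s| ≤ 1 :=
            le_trans (picard_bound hA hB hC hbA hbB hbC (n+1) s hs.1 hs1)
              (pow_le_one₀ hs.1 hs1)
          have hz : |picardK (gfun A B C) n s| ≤ 1 :=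
            le_trans (picard_bound hA hB hC hbA hbB hbC n s hs.1 hs1)
              (pow_le_one₀ hs.1 hs1)
          have hlip := glip (C := C) (t := t) (s := s) hbA hbB hy hz
          have hdiff := ih s hs.1 hs1
          calc |gfun A B C t s (picardK (gfun A B C) (n+1) s)
                - gfun A B C t s (picardK (gfun A B C) n s)|
              ≤ 3 * s ^ 2 * |picardK (gfun A B C) (n+1) s - picardK (gfun A B C) n s| := hlip
            _ ≤ 3 * s ^ 2 * (s ^ (3 * (n+1)) / ((n+1).factorial : ℝ)) := by
                have hs2 : (0:ℝ) ≤ 3 * s ^ 2 := by positivity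
                exact mul_le_mul_of_nonneg_left hdiff hs2
            _ = 3 / ((n+1).factorial : ℝ) * s ^ (3 * (n+1) + 2) := by ring
          )
      refine le_trans hkey (le_of_eq ?_)
      have h1 : 3 * (n+1) + 2 + 1 = 3 * (n + 1 + 1) := by ring
      rw [h1]
      have hfs : (((n+1+1).factorial : ℕ) : ℝ) = ((n:ℝ)+2) * (((n+1).factorial : ℕ) : ℝ) := by
        rw [Nat.factorial_succ]; push_cast; ring
      rw [hfs]
      have hn : ((3 * (n + 1) + 2 : ℕ) : ℝ) + 1 = 3 * (n:ℝ) + 6 := by push_cast; ring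
      rw [hn]
      have ha : (0:ℝ) < (((n+1).factorial : ℕ) : ℝ) := by positivity
      have hb2 : (0:ℝ) < 3 * (n:ℝ) + 6 := by positivity
      field_simp
      ring

end aux

lemma clamp_cont {K : ℝ → ℝ → ℝ}
    (hc : ContinuousOn (fun p : ℝ × ℝ => K p.1 p.2) {p : ℝ × ℝ | 0 ≤ p.2 ∧ p.2 ≤ p.1}) :
    Continuous fun p : ℝ × ℝ => K (max p.1 0) (min (max p.2 0) (max p.1 0)) := by
  have hm : Continuous fun p : ℝ × ℝ => ((max p.1 0, min (max p.2 0) (max p.1 0)) : ℝ × ℝ) := by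
    fun_prop
  exact hc.comp_continuous hm
    (fun p => ⟨le_min (le_max_right _ _) (le_max_right _ _), min_le_right _ _⟩)

lemma clamp_bound {K : ℝ → ℝ → ℝ} (hb : ∀ t s : ℝ, 0 ≤ s → s ≤ t → |K t s| ≤ 1) :
    ∀ t s : ℝ, |K (max t 0) (min (max s 0) (max t 0))| ≤ 1 := fun t s =>
  hb _ _ (le_min (le_max_right _ _) (le_max_right _ _)) (min_le_right _ _)

lemma clamp_eq {K : ℝ → ℝ → ℝ} {t s : ℝ} (hs : 0 ≤ s) (hst : s ≤ t) :
    K (max t 0) (min (max s 0) (max t 0)) = K t s := by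
  rw [max_eq_left (hs.trans hst), max_eq_left hs, min_eq_left hst]

lemma picard_eq {f g : ℝ → ℝ → ℝ → ℝ}
    (h : ∀ t s y : ℝ, 0 ≤ s → s ≤ t → t ≤ 1 → f t s y = g t s y) :
    ∀ n, ∀ t ∈ Icc (0:ℝ) 1, picardK f n t = picardK g n t := by
  intro n
  induction n with
  | zero => intro t _; rfl
  | succ n ih =>
      intro t ht
      show (∫ s in (0:ℝ)..t, f t s (picardK f n s)) = ∫ s in (0:ℝ)..t, g t s (picardK g n s)
      apply intervalIntegral.integral_congr
      intro s hs
      rw [uIcc_of_le ht.1] at hs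
      have hs1 : s ∈ Icc (0:ℝ) 1 := ⟨hs.1, hs.2.trans ht.2⟩
      show f t s (picardK f n s) = g t s (picardK g n s)
      rw [ih s hs1, h t s _ hs.1 hs.2 ht.2]

lemma master {A B C : ℝ → ℝ → ℝ}
    (hA : Continuous fun p : ℝ × ℝ => A p.1 p.2)
    (hB : Continuous fun p : ℝ × ℝ => B p.1 p.2)
    (hC : Continuous fun p : ℝ × ℝ => C p.1 p.2)
    (hbA : ∀ t s, |A t s| ≤ 1) (hbB : ∀ t s, |B t s| ≤ 1) (hbC : ∀ t s, |C t s| ≤ 1) :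
    ∃ x : ℝ → ℝ, ContinuousOn x (Icc 0 1) ∧
      (∀ t ∈ Icc (0:ℝ) 1, x t = ∫ s in (0:ℝ)..t, gfun A B C t s (x s)) ∧
      (∀ t ∈ Icc (0:ℝ) 1, |x t| ≤ 1) ∧
      TendstoUniformlyOn (fun n => picardK (gfun A B C) n) x atTop (Icc 0 1) := by
  have hpc := picard_cont hA hB hC
  have hpb := picard_bound hA hB hC hbA hbB hbC
  have hpd := picard_diff hA hB hC hbA hbB hbC
  set P := picardK (gfun A B C) with hP
  have hsum : Summable (fun n : ℕ => (1:ℝ) / (n+1).factorial) := by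
    have h := (Real.summable_pow_div_factorial 1).comp_injective (add_left_injective 1)
    simpa [Function.comp_def] using h
  have hFbound : ∀ n : ℕ, ∀ t ∈ Icc (0:ℝ) 1, ‖P (n+1) t - P n t‖ ≤ 1 / (n+1).factorial := by
    intro n t ht
    rw [Real.norm_eq_abs]
    refine le_trans (hpd n t ht.1 ht.2) ?_
    have h1 : t ^ (3*(n+1)) ≤ 1 := pow_le_one₀ ht.1 ht.2
    have h2 : (0:ℝ) < (((n+1).factorial : ℕ) : ℝ) := by positivity
    rw [div_le_div_iff₀ h2 h2]
    nlinarith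
  have htu0 : TendstoUniformlyOn (fun N t => ∑ n ∈ Finset.range N, (P (n+1) t - P n t))
      (fun t => ∑' n, (P (n+1) t - P n t)) atTop (Icc 0 1) :=
    tendstoUniformlyOn_tsum_nat hsum (fun n t ht => hFbound n t ht)
  set x : ℝ → ℝ := fun t => ∑' n, (P (n+1) t - P n t) with hx
  have hps : ∀ (N : ℕ) (t : ℝ), (∑ n ∈ Finset.range N, (P (n+1) t - P n t)) = P N t := by
    intro N t
    rw [Finset.sum_range_sub (fun n => P n t)]
    show P N t - 0 = P N t
    exact sub_zero _
  have htu : TendstoUniformlyOn (fun N => P N) x atTop (Icc 0 1) :=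
    htu0.congr (Eventually.of_forall fun N t _ => hps N t)
  have hxc : ContinuousOn x (Icc 0 1) :=
    htu.continuousOn (Frequently.of_forall fun n => (hpc n).continuousOn)
  have hxb : ∀ t ∈ Icc (0:ℝ) 1, |x t| ≤ 1 := by
    intro t ht
    have hxt : Tendsto (fun n => P n t) atTop (𝓝 (x t)) := htu.tendsto_at ht
    refine le_of_tendsto hxt.abs (Eventually.of_forall fun n => ?_)
    exact le_trans (hpb n t ht.1 ht.2) (pow_le_one₀ ht.1 ht.2)
  refine ⟨x, hxc, ?_, hxb, htu⟩
  intro t ht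
  have hlim1 : Tendsto (fun n => P (n+1) t) atTop (𝓝 (x t)) :=
    (htu.tendsto_at ht).comp (tendsto_add_atTop_nat 1)
  have hlim2 : Tendsto (fun n => ∫ s in (0:ℝ)..t, gfun A B C t s (P n s)) atTop
      (𝓝 (∫ s in (0:ℝ)..t, gfun A B C t s (x s))) := by
    apply intervalIntegral.tendsto_integral_filter_of_dominated_convergence
      (bound := fun _ => (3:ℝ))
    · refine Eventually.of_forall fun n => Continuous.aestronglyMeasurable ?_
      have := hpc n
      unfold gfun
      fun_prop
    · refine Eventually.of_forall fun n => MeasureTheory.ae_of_all _ fun s hsI => ?_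
      rw [uIoc_of_le ht.1] at hsI
      have hs1 : s ≤ 1 := hsI.2.trans ht.2
      have hy : |P n s| ≤ 1 := le_trans (hpb n s hsI.1.le hs1) (pow_le_one₀ hsI.1.le hs1)
      rw [Real.norm_eq_abs]
      refine le_trans (gbound hbA hbB hbC hy) ?_
      nlinarith [hsI.1.le, sq_nonneg s]
    · exact intervalIntegrable_const
    · refine MeasureTheory.ae_of_all _ fun s hsI => ?_
      rw [uIoc_of_le ht.1] at hsI
      have hcy : Continuous fun y => gfun A B C t s y := by unfold gfun; fun_prop
      exact ((hcy.tendsto (x s)).comp (htu.tendsto_at ⟨hsI.1.le, hsI.2.trans ht.2⟩))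
  exact tendsto_nhds_unique hlim1 hlim2

/-- example: the equation
x(t) = ∫₀ᵗ (K₂(t,s)x(s)² + K₁(t,s)x(s) + K₀(t,s)) s² ds with |Kᵢ| ≤ 1
has a continuous solution on [0,1] with ‖x‖ ≤ 1, obtained as the uniform
limit of the Picard iterates from x₀ ≡ 0. -/
theorem stmt15 (K₀ K₁ K₂ : ℝ → ℝ → ℝ)
    (hc₀ : ContinuousOn (fun p : ℝ × ℝ => K₀ p.1 p.2) {p : ℝ × ℝ | 0 ≤ p.2 ∧ p.2 ≤ p.1})
    (hc₁ : ContinuousOn (fun p : ℝ × ℝ => K₁ p.1 p.2) {p : ℝ × ℝ | 0 ≤ p.2 ∧ p.2 ≤ p.1})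
    (hc₂ : ContinuousOn (fun p : ℝ × ℝ => K₂ p.1 p.2) {p : ℝ × ℝ | 0 ≤ p.2 ∧ p.2 ≤ p.1})
    (hb₀ : ∀ t s : ℝ, 0 ≤ s → s ≤ t → |K₀ t s| ≤ 1)
    (hb₁ : ∀ t s : ℝ, 0 ≤ s → s ≤ t → |K₁ t s| ≤ 1)
    (hb₂ : ∀ t s : ℝ, 0 ≤ s → s ≤ t → |K₂ t s| ≤ 1) :
    ∃ x : ℝ → ℝ, ContinuousOn x (Icc 0 1) ∧
      (∀ t ∈ Icc (0:ℝ) 1,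
        x t = ∫ s in (0:ℝ)..t, (K₂ t s * x s ^ 2 + K₁ t s * x s + K₀ t s) * s ^ 2) ∧
      (∀ t ∈ Icc (0:ℝ) 1, |x t| ≤ 1) ∧
      TendstoUniformlyOn
        (fun n => picardK (fun t s y => (K₂ t s * y ^ 2 + K₁ t s * y + K₀ t s) * s ^ 2) n)
        x atTop (Icc 0 1) := by
  obtain ⟨x, hxc, hxeq, hxb, hxtu⟩ := master
    (A := fun t s => K₂ (max t 0) (min (max s 0) (max t 0)))
    (B := fun t s => K₁ (max t 0) (min (max s 0) (max t 0)))
    (C := fun t s => K₀ (max t 0) (min (max s 0) (max t 0)))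
    (clamp_cont hc₂) (clamp_cont hc₁) (clamp_cont hc₀)
    (clamp_bound hb₂) (clamp_bound hb₁) (clamp_bound hb₀)
  have hfg : ∀ t s y : ℝ, 0 ≤ s → s ≤ t →
      gfun (fun t s => K₂ (max t 0) (min (max s 0) (max t 0)))
        (fun t s => K₁ (max t 0) (min (max s 0) (max t 0)))
        (fun t s => K₀ (max t 0) (min (max s 0) (max t 0))) t s y
      = (K₂ t s * y ^ 2 + K₁ t s * y + K₀ t s) * s ^ 2 := by
    intro t s y hs hst
    simp only [gfun]
    rw [clamp_eq (K := K₂) hs hst, clamp_eq (K := K₁) hs hst, clamp_eq (K := K₀) hs hst]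
  refine ⟨x, hxc, ?_, hxb, ?_⟩
  · intro t ht
    rw [hxeq t ht]
    apply intervalIntegral.integral_congr
    intro s hs
    rw [uIcc_of_le ht.1] at hs
    exact hfg t s (x s) hs.1 hs.2
  · refine hxtu.congr (Eventually.of_forall fun n => ?_)
    intro t ht
    exact picard_eq (fun t s y hs hst _ => hfg t s y hs hst) n t ht
end

section
/- (Alternative of global solvability) Under conditions (A), (B) with l = ∫₀^∞ dy/γ(y) < ∞ and T₁ defined by ∫₀^{T₁} m(s) ds = l, the main (Picard-limit) solution x of x(t) = ∫₀ᵗ K(t,s,x(s)) ds exists on [0,T₁) and satisfies |x(t)| ≤ x̂(t) there, where x̂ solves x̂' = m γ(x̂), x̂(0)=0, and x̂(t) → ∞ as t → T₁⁻; consequently either x extends continuously beyond T₁ or x blows up at some point ≥ T₁. -/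
open Set Filter intervalIntegral

open scoped Nat


private lemma fact_decay (a D : ℝ) : Tendsto (fun n : ℕ => D * a ^ n / (n ! : ℝ)) atTop (nhds 0) := by
  have h := (Real.summable_pow_div_factorial a).tendsto_atTop_zero
  have := h.const_mul D
  simpa [mul_div_assoc] using this

private lemma volterra_unique (F : ℝ → ℝ → ℝ → ℝ) (c Λ : ℝ) (hc : 0 ≤ c) (hΛ : 0 ≤ Λ)
    (y₁ y₂ : ℝ → ℝ)
    (h1 : ContinuousOn y₁ (Icc 0 c)) (h2 : ContinuousOn y₂ (Icc 0 c))
    (hF1 : ∀ t ∈ Icc (0:ℝ) c, ContinuousOn (fun s => F t s (y₁ s)) (Icc 0 t))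
    (hF2 : ∀ t ∈ Icc (0:ℝ) c, ContinuousOn (fun s => F t s (y₂ s)) (Icc 0 t))
    (hL : ∀ t ∈ Icc (0:ℝ) c, ∀ s ∈ Icc (0:ℝ) t, |F t s (y₁ s) - F t s (y₂ s)| ≤ Λ * |y₁ s - y₂ s|)
    (he1 : ∀ t ∈ Icc (0:ℝ) c, y₁ t = ∫ s in (0:ℝ)..t, F t s (y₁ s))
    (he2 : ∀ t ∈ Icc (0:ℝ) c, y₂ t = ∫ s in (0:ℝ)..t, F t s (y₂ s)) :
    EqOn y₁ y₂ (Icc 0 c) := by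
  set d : ℝ → ℝ := fun t => |y₁ t - y₂ t| with hd
  have hdc : ContinuousOn d (Icc 0 c) := (h1.sub h2).abs
  obtain ⟨D, hD⟩ : ∃ D, ∀ t ∈ Icc (0:ℝ) c, d t ≤ D := by
    rcases IsCompact.exists_bound_of_continuousOn isCompact_Icc hdc with ⟨D, hD⟩
    exact ⟨D, fun t ht => (le_abs_self _).trans (by simpa using hD t ht)⟩
  have hdint : ∀ t ∈ Icc (0:ℝ) c, IntervalIntegrable d MeasureTheory.volume 0 t := by
    intro t ht
    exact (hdc.mono (Icc_subset_Icc le_rfl ht.2)).intervalIntegrable_of_Icc ht.1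
  have key : ∀ t ∈ Icc (0:ℝ) c, d t ≤ Λ * ∫ s in (0:ℝ)..t, d s := by
    intro t ht
    have hI1 : IntervalIntegrable (fun s => F t s (y₁ s)) MeasureTheory.volume 0 t :=
      (hF1 t ht).intervalIntegrable_of_Icc ht.1
    have hI2 : IntervalIntegrable (fun s => F t s (y₂ s)) MeasureTheory.volume 0 t :=
      (hF2 t ht).intervalIntegrable_of_Icc ht.1
    have : d t = |∫ s in (0:ℝ)..t, (F t s (y₁ s) - F t s (y₂ s))| := by
      rw [hd]; simp only
      rw [he1 t ht, he2 t ht, intervalIntegral.integral_sub hI1 hI2]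
    rw [this]
    calc |∫ s in (0:ℝ)..t, (F t s (y₁ s) - F t s (y₂ s))|
        ≤ ∫ s in (0:ℝ)..t, |F t s (y₁ s) - F t s (y₂ s)| := by
          simpa using intervalIntegral.abs_integral_le_integral_abs ht.1 (f := fun s => F t s (y₁ s) - F t s (y₂ s))
      _ ≤ ∫ s in (0:ℝ)..t, Λ * d s := by
          apply intervalIntegral.integral_mono_on ht.1 ((hI1.sub hI2).abs) ((hdint t ht).const_mul Λ)
          intro s hs
          exact hL t ht s hs
      _ = Λ * ∫ s in (0:ℝ)..t, d s := intervalIntegral.integral_const_mul _ _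
  have ind : ∀ n : ℕ, ∀ t ∈ Icc (0:ℝ) c, d t ≤ D * (Λ * t) ^ n / (n ! : ℝ) := by
    intro n
    induction n with
    | zero => intro t ht; simpa using hD t ht
    | succ n ih =>
      intro t ht
      have h1' : (∫ s in (0:ℝ)..t, d s) ≤ ∫ s in (0:ℝ)..t, D * (Λ * s) ^ n / (n ! : ℝ) := by
        apply intervalIntegral.integral_mono_on ht.1 (hdint t ht)
        · apply Continuous.intervalIntegrable; continuity
        · intro s hs; exact ih s ⟨hs.1, hs.2.trans ht.2⟩
      have h2' : (∫ s in (0:ℝ)..t, D * (Λ * s) ^ n / (n ! : ℝ)) = D * Λ ^ n / (n ! : ℝ) * (t ^ (n+1) / (n+1)) := by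
        have : ∀ s : ℝ, D * (Λ * s) ^ n / (n ! : ℝ) = D * Λ ^ n / (n ! : ℝ) * s ^ n := by
          intro s; rw [mul_pow]; ring
        simp_rw [this]
        rw [intervalIntegral.integral_const_mul, integral_pow]
        ring
      calc d t ≤ Λ * ∫ s in (0:ℝ)..t, d s := key t ht
        _ ≤ Λ * (D * Λ ^ n / (n ! : ℝ) * (t ^ (n+1) / (n+1))) := by
            rw [← h2']
            exact mul_le_mul_of_nonneg_left h1' hΛ
        _ = D * (Λ * t) ^ (n+1) / (n+1)! := by
            rw [mul_pow, Nat.factorial_succ]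
            have hfn : ((n)! : ℝ) ≠ 0 := by positivity
            push_cast
            field_simp
            ring
  intro t ht
  have hle : d t ≤ 0 := by
    refine le_of_tendsto_of_tendsto tendsto_const_nhds (fact_decay (Λ * c) D) ?_
    filter_upwards [] with n
    refine (ind n t ht).trans ?_
    have hD0 : 0 ≤ D := le_trans (abs_nonneg _) (hD 0 ⟨le_rfl, hc⟩)
    gcongr
    · exact mul_nonneg hΛ ht.1
    · exact ht.2
  have : d t = 0 := le_antisymm hle (abs_nonneg _)
  exact sub_eq_zero.1 (abs_eq_zero.1 this)

private lemma volterra_exists (F : ℝ → ℝ → ℝ → ℝ) (C Λ : ℝ) (hC : 0 ≤ C) (hΛ : 0 ≤ Λ)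
    (hF : Continuous (fun p : ℝ × ℝ × ℝ => F p.1 p.2.1 p.2.2))
    (hFb : ∀ t s v, |F t s v| ≤ C)
    (hFl : ∀ t s a b, |F t s a - F t s b| ≤ Λ * |a - b|) :
    ∃ z : ℝ → ℝ, Continuous z ∧ ∀ t, 0 ≤ t → z t = ∫ s in (0:ℝ)..t, F t s (z s) := by
  classical
  -- Picard iterates
  let X : ℕ → ℝ → ℝ := fun n => n.rec (fun _ => (0:ℝ))
    (fun _ prev => fun t => ∫ s in (0:ℝ)..t, F t s (prev s))
  have hX0 : ∀ t, X 0 t = 0 := fun _ => rfl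
  have hXs : ∀ n t, X (n+1) t = ∫ s in (0:ℝ)..t, F t s (X n s) := fun n t => rfl
  have hXc : ∀ n, Continuous (X n) := by
    intro n
    induction n with
    | zero => exact continuous_const
    | succ n ih =>
      have h1 : Continuous (Function.uncurry fun t s => F t s (X n s)) := by
        have : Continuous (fun p : ℝ × ℝ => ((p.1, p.2, X n p.2) : ℝ × ℝ × ℝ)) :=
          continuous_fst.prodMk (continuous_snd.prodMk (ih.comp continuous_snd))
        exact hF.comp this
      exact intervalIntegral.continuous_parametric_intervalIntegral_of_continuous h1 continuous_id
  have hFcomp : ∀ (g : ℝ → ℝ) (t : ℝ), Continuous g →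
      IntervalIntegrable (fun s => F t s (g s)) MeasureTheory.volume 0 t := by
    intro g t hg
    apply Continuous.intervalIntegrable
    have : Continuous (fun s : ℝ => ((t, s, g s) : ℝ × ℝ × ℝ)) :=
      continuous_const.prodMk (continuous_id.prodMk hg)
    exact hF.comp this
  -- the key estimate
  have E : ∀ n, ∀ t : ℝ, 0 ≤ t → |X (n+1) t - X n t| ≤ C * t * (Λ * t) ^ n / (n ! : ℝ) := by
    intro n
    induction n with
    | zero =>
      intro t ht
      rw [hXs 0 t, hX0 t, sub_zero]
      calc |∫ s in (0:ℝ)..t, F t s (X 0 s)| ≤ ∫ s in (0:ℝ)..t, |F t s (X 0 s)| := by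
            simpa using intervalIntegral.abs_integral_le_integral_abs ht
              (f := fun s => F t s (X 0 s))
        _ ≤ ∫ s in (0:ℝ)..t, C := by
            apply intervalIntegral.integral_mono_on ht ((hFcomp _ t (hXc 0)).abs)
              intervalIntegrable_const
            intro s _; exact hFb t s (X 0 s)
        _ = C * t := by simp [mul_comm]
        _ = C * t * (Λ * t) ^ 0 / (0 ! : ℝ) := by simp
    | succ n ih =>
      intro t ht
      have hsub : X (n+2) t - X (n+1) t
          = ∫ s in (0:ℝ)..t, (F t s (X (n+1) s) - F t s (X n s)) := by
        rw [hXs (n+1) t, hXs n t,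
          intervalIntegral.integral_sub (hFcomp _ t (hXc (n+1))) (hFcomp _ t (hXc n))]
      rw [hsub]
      calc |∫ s in (0:ℝ)..t, (F t s (X (n+1) s) - F t s (X n s))|
          ≤ ∫ s in (0:ℝ)..t, |F t s (X (n+1) s) - F t s (X n s)| := by
            simpa using intervalIntegral.abs_integral_le_integral_abs ht
              (f := fun s => F t s (X (n+1) s) - F t s (X n s))
        _ ≤ ∫ s in (0:ℝ)..t, Λ * (C * s * (Λ * s) ^ n / (n ! : ℝ)) := by
            apply intervalIntegral.integral_mono_on ht
              (((hFcomp _ t (hXc (n+1))).sub (hFcomp _ t (hXc n))).abs)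
              (by apply Continuous.intervalIntegrable; continuity)
            intro s hs
            exact (hFl t s _ _).trans (by
              have := ih s hs.1
              have h2 : |X (n+1) s - X n s| ≤ C * s * (Λ * s) ^ n / (n ! : ℝ) := this
              exact mul_le_mul_of_nonneg_left h2 hΛ)
        _ = Λ * C * Λ ^ n / (n ! : ℝ) * ∫ s in (0:ℝ)..t, s ^ (n+1) := by
            rw [← intervalIntegral.integral_const_mul]
            apply intervalIntegral.integral_congr
            intro s _
            simp only [mul_pow]
            ring
        _ = Λ * C * Λ ^ n / (n ! : ℝ) * (t ^ (n+2) / (n+2)) := by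
            rw [integral_pow]
            push_cast
            rw [show n + 1 + 1 = n + 2 from rfl]
            rw [zero_pow (by omega)]
            ring
        _ ≤ C * t * (Λ * t) ^ (n+1) / ((n+1)! : ℝ) := by
            rw [mul_pow, Nat.factorial_succ]
            have h1 : (0:ℝ) < (n ! : ℝ) := by positivity
            have h2 : ((n:ℝ) + 1) * (n ! : ℝ) ≤ ((n:ℝ) + 2) * (n ! : ℝ) := by nlinarith
            have ht2 : (0:ℝ) ≤ t ^ (n+2) := by positivity
            have hΛn : (0:ℝ) ≤ Λ ^ (n+1) := by positivity
            have key : Λ ^ (n+1) * C * t ^ (n+2) / ((n:ℝ)+2) / (n ! : ℝ)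
                ≤ Λ ^ (n+1) * C * t ^ (n+2) / (((n:ℝ)+1) * (n ! : ℝ)) := by
              rw [div_div]
              apply div_le_div_of_nonneg_left _ (by positivity) _
              · positivity
              · nlinarith
            calc Λ * C * Λ ^ n / (n ! : ℝ) * (t ^ (n+2) / ((n:ℝ)+2))
                = Λ ^ (n+1) * C * t ^ (n+2) / ((n:ℝ)+2) / (n ! : ℝ) := by ring
              _ ≤ Λ ^ (n+1) * C * t ^ (n+2) / (((n:ℝ)+1) * (n ! : ℝ)) := key
              _ = C * t * (Λ ^ (n+1) * t ^ (n+1)) / (((n:ℝ)+1) * (n ! : ℝ)) := by ring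
              _ = C * t * (Λ ^ (n+1) * t ^ (n+1)) / (((n+1)! : ℝ)) := by
                  rw [Nat.factorial_succ]; push_cast; ring_nf
  -- pointwise convergence
  have hcau : ∀ t : ℝ, 0 ≤ t → ∃ L, Tendsto (fun n => X n t) atTop (nhds L) := by
    intro t ht
    apply cauchySeq_tendsto_of_complete
    apply cauchySeq_of_dist_le_of_summable (fun n => C * t * (Λ * t) ^ n / (n ! : ℝ))
    · intro n
      rw [dist_eq_norm]
      simpa [abs_sub_comm] using E n t ht
    · have h := (Real.summable_pow_div_factorial (Λ * t)).mul_left (C * t)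
      apply h.congr
      intro n
      rw [mul_div_assoc]
  choose! w hw using hcau
  -- tail estimate : uniform convergence on [0, A]
  have htail : ∀ A : ℝ, 0 ≤ A → ∀ n : ℕ, ∀ t ∈ Icc (0:ℝ) A,
      dist (X n t) (w t) ≤ C * A * (Λ * A) ^ n / (n ! : ℝ) * (∑' k : ℕ, (Λ * A) ^ k / (k ! : ℝ)) := by
    intro A hA n t htA
    have hΛA : 0 ≤ Λ * A := mul_nonneg hΛ hA
    have hsum : Summable (fun k => C * A * (Λ * A) ^ k / (k ! : ℝ)) := by
      have h := (Real.summable_pow_div_factorial (Λ * A)).mul_left (C * A)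
      apply h.congr; intro k; rw [mul_div_assoc]
    have hstep : ∀ k : ℕ, dist (X k t) (X (k+1) t) ≤ C * A * (Λ * A) ^ k / (k ! : ℝ) := by
      intro k
      rw [dist_eq_norm]
      have h1 : ‖X k t - X (k+1) t‖ ≤ C * t * (Λ * t) ^ k / (k ! : ℝ) := by
        simpa [abs_sub_comm] using E k t htA.1
      refine h1.trans ?_
      gcongr <;> first
        | positivity
        | exact htA.1
        | exact htA.2
        | exact mul_nonneg hΛ htA.1
        | exact mul_le_mul_of_nonneg_left htA.2 hΛ
        | exact pow_nonneg (mul_nonneg hΛ htA.1) k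
    have h2 := dist_le_tsum_of_dist_le_of_tendsto (fun k => C * A * (Λ * A) ^ k / (k ! : ℝ))
      hstep hsum (hw t htA.1) n
    refine h2.trans ?_
    have hsum1 : Summable (fun k => C * A * (Λ * A) ^ (n + k) / ((n + k)! : ℝ)) := by
      have h := (summable_nat_add_iff n).2 hsum
      exact h.congr (fun k => by rw [Nat.add_comm k n])
    have hsum2 : Summable (fun k : ℕ => C * A * (Λ * A) ^ n / (n ! : ℝ) * ((Λ * A) ^ k / (k ! : ℝ))) :=
      (Real.summable_pow_div_factorial (Λ * A)).mul_left _
    have hle : ∀ k : ℕ, C * A * (Λ * A) ^ (n + k) / ((n + k)! : ℝ)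
        ≤ C * A * (Λ * A) ^ n / (n ! : ℝ) * ((Λ * A) ^ k / (k ! : ℝ)) := by
      intro k
      have hfac : ((n ! : ℝ)) * (k ! : ℝ) ≤ ((n + k)! : ℝ) := by
        exact_mod_cast Nat.le_of_dvd (Nat.factorial_pos _) (Nat.factorial_mul_factorial_dvd_factorial_add n k)
      have hnum : (0:ℝ) ≤ C * A * (Λ * A) ^ (n + k) := by positivity
      calc C * A * (Λ * A) ^ (n + k) / ((n + k)! : ℝ)
          ≤ C * A * (Λ * A) ^ (n + k) / ((n ! : ℝ) * (k ! : ℝ)) := by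
            exact div_le_div_of_nonneg_left hnum (by positivity) hfac
        _ = C * A * (Λ * A) ^ n / (n ! : ℝ) * ((Λ * A) ^ k / (k ! : ℝ)) := by
            rw [pow_add]; ring
    calc (∑' k : ℕ, C * A * (Λ * A) ^ (n + k) / ((n + k)! : ℝ))
        ≤ ∑' k : ℕ, C * A * (Λ * A) ^ n / (n ! : ℝ) * ((Λ * A) ^ k / (k ! : ℝ)) :=
          Summable.tsum_le_tsum hle hsum1 hsum2
      _ = C * A * (Λ * A) ^ n / (n ! : ℝ) * (∑' k : ℕ, (Λ * A) ^ k / (k ! : ℝ)) :=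
          tsum_mul_left
  have hUC : ∀ A : ℝ, 0 ≤ A → TendstoUniformlyOn X w atTop (Icc 0 A) := by
    intro A hA
    rw [Metric.tendstoUniformlyOn_iff]
    intro ε hε
    have hten : Tendsto (fun n : ℕ => C * A * (Λ * A) ^ n / (n ! : ℝ) * (∑' k : ℕ, (Λ * A) ^ k / (k ! : ℝ)))
        atTop (nhds 0) := by
      simpa using (fact_decay (Λ * A) (C * A)).mul_const (∑' k : ℕ, (Λ * A) ^ k / (k ! : ℝ))
    filter_upwards [(Metric.tendsto_nhds.1 hten) ε hε] with n hn t htA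
    have := htail A hA n t htA
    rw [_root_.dist_comm]
    calc dist (X n t) (w t) ≤ _ := this
      _ < ε := by
        have h0 := dist_nonneg.trans this
        calc _ ≤ |C * A * (Λ * A) ^ n / (n ! : ℝ) * (∑' k : ℕ, (Λ * A) ^ k / (k ! : ℝ))| := le_abs_self _
          _ < ε := by rw [Real.dist_eq, sub_zero] at hn; exact hn
  -- continuity of w on [0, ∞)
  have hwc : ContinuousOn w (Ici 0) := by
    intro t ht
    have h1 : ContinuousOn w (Icc 0 (t+1)) :=
      (hUC (t+1) (by have := mem_Ici.1 ht; linarith)).continuousOn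
        (Filter.Eventually.of_forall (fun n => (hXc n).continuousOn)).frequently
    have h2 : ContinuousWithinAt w (Icc 0 (t+1)) t :=
      h1 t ⟨mem_Ici.1 ht, by have := mem_Ici.1 ht; linarith⟩
    apply h2.mono_of_mem_nhdsWithin
    have : Ico (0:ℝ) (t+1) ∈ nhdsWithin t (Ici 0) := by
      rw [show Ico (0:ℝ) (t+1) = Ici 0 ∩ Iio (t+1) from rfl]
      exact Filter.inter_mem self_mem_nhdsWithin
        (mem_nhdsWithin_of_mem_nhds (Iio_mem_nhds (by linarith [mem_Ici.1 ht])))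
    exact Filter.mem_of_superset this Ico_subset_Icc_self
  -- the equation for w
  have heqw : ∀ t : ℝ, 0 ≤ t → w t = ∫ s in (0:ℝ)..t, F t s (w s) := by
    intro t ht
    have hwint : IntervalIntegrable (fun s => F t s (w s)) MeasureTheory.volume 0 t := by
      apply ContinuousOn.intervalIntegrable_of_Icc ht
      have hmap : MapsTo (fun s : ℝ => ((t, s, w s) : ℝ × ℝ × ℝ)) (Icc 0 t) univ :=
        fun s _ => trivial
      exact hF.comp_continuousOn
        (continuousOn_const.prodMk (continuousOn_id.prodMk (hwc.mono (fun s hs => hs.1))))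
    have h1 : Tendsto (fun n => X (n+1) t) atTop (nhds (w t)) :=
      (hw t ht).comp (tendsto_add_atTop_nat 1)
    have h2 : Tendsto (fun n => X (n+1) t) atTop (nhds (∫ s in (0:ℝ)..t, F t s (w s))) := by
      rw [tendsto_iff_dist_tendsto_zero]
      apply squeeze_zero (fun n => dist_nonneg)
        (g := fun n => Λ * (C * t * (Λ * t) ^ n / (n ! : ℝ) * (∑' k : ℕ, (Λ * t) ^ k / (k ! : ℝ))) * t)
      · intro n
        rw [dist_eq_norm, hXs n t]
        have hsubint : IntervalIntegrable (fun s => F t s (X n s) - F t s (w s)) MeasureTheory.volume 0 t :=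
          (hFcomp _ t (hXc n)).sub hwint
        rw [← intervalIntegral.integral_sub (hFcomp _ t (hXc n)) hwint]
        calc ‖∫ s in (0:ℝ)..t, (F t s (X n s) - F t s (w s))‖
            ≤ ∫ s in (0:ℝ)..t, |F t s (X n s) - F t s (w s)| := by
              simpa using intervalIntegral.abs_integral_le_integral_abs ht
                (f := fun s => F t s (X n s) - F t s (w s))
          _ ≤ ∫ s in (0:ℝ)..t, Λ * (C * t * (Λ * t) ^ n / (n ! : ℝ) * (∑' k : ℕ, (Λ * t) ^ k / (k ! : ℝ))) := by
              apply intervalIntegral.integral_mono_on ht hsubint.abs intervalIntegrable_const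
              intro s hs
              refine (hFl t s _ _).trans ?_
              apply mul_le_mul_of_nonneg_left _ hΛ
              have := htail t ht n s hs
              rwa [Real.dist_eq] at this
          _ = Λ * (C * t * (Λ * t) ^ n / (n ! : ℝ) * (∑' k : ℕ, (Λ * t) ^ k / (k ! : ℝ))) * t := by
              rw [intervalIntegral.integral_const]
              simp [mul_comm]
      · have : Tendsto (fun n : ℕ => C * t * (Λ * t) ^ n / (n ! : ℝ) * (∑' k : ℕ, (Λ * t) ^ k / (k ! : ℝ)))
            atTop (nhds 0) := by
          simpa using (fact_decay (Λ * t) (C * t)).mul_const (∑' k : ℕ, (Λ * t) ^ k / (k ! : ℝ))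
        simpa using ((this.const_mul Λ).mul_const t)
    exact tendsto_nhds_unique h1 h2
  -- final answer : compose with max
  refine ⟨fun t => w (max t 0), ?_, ?_⟩
  · apply hwc.comp_continuous (continuous_id.max continuous_const)
    intro x
    exact mem_Ici.2 (le_max_right _ _)
  · intro t ht
    simp only [max_eq_left ht]
    rw [heqw t ht]
    apply intervalIntegral.integral_congr
    intro s hs
    rw [uIcc_of_le ht] at hs
    simp [max_eq_left hs.1]

private lemma majorant_solution (m γ : ℝ → ℝ) (l T₁ : ℝ)
    (hmc : Continuous m) (hmpos : ∀ s ∈ Ici (0:ℝ), 0 < m s)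
    (hγc : Continuous γ) (hγpos : ∀ x ∈ Ici (0:ℝ), 0 < γ x)
    (hl : Tendsto (fun x => ∫ y in (0:ℝ)..x, 1 / γ y) atTop (nhds l))
    (hT₁pos : 0 < T₁) (hT₁ : (∫ s in (0:ℝ)..T₁, m s) = l) :
    ∃ G M xh : ℝ → ℝ,
      (∀ y : ℝ, HasDerivAt G (1 / γ (max y 0)) y) ∧
      StrictMono G ∧
      (∀ y, G y < l) ∧
      G 0 = 0 ∧
      Tendsto G atTop (nhds l) ∧
      (∀ t, HasDerivAt M (m (max t 0)) t) ∧
      M 0 = 0 ∧ M T₁ = l ∧ StrictMono M ∧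
      (∀ t, t < T₁ → G (xh t) = M t) ∧
      xh 0 = 0 ∧
      (∀ t, t < T₁ → HasDerivAt xh (γ (max (xh t) 0) * m (max t 0)) t) ∧
      (∀ t, 0 ≤ t → t < T₁ → 0 ≤ xh t) ∧
      Tendsto xh (nhdsWithin T₁ (Iio T₁)) atTop := by
  classical
  set γt : ℝ → ℝ := fun y => γ (max y 0) with hγt
  set mt : ℝ → ℝ := fun s => m (max s 0) with hmt
  have hγtc : Continuous γt := hγc.comp (continuous_id.max continuous_const)
  have hmtc : Continuous mt := hmc.comp (continuous_id.max continuous_const)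
  have hγtpos : ∀ y, 0 < γt y := fun y => hγpos _ (mem_Ici.2 (le_max_right _ _))
  have hmtpos : ∀ s, 0 < mt s := fun s => hmpos _ (mem_Ici.2 (le_max_right _ _))
  set G : ℝ → ℝ := fun y => ∫ z in (0:ℝ)..y, 1 / γt z with hG
  set M : ℝ → ℝ := fun t => ∫ s in (0:ℝ)..t, mt s with hM
  have hGd : ∀ y : ℝ, HasDerivAt G (1 / γt y) y := by
    intro y
    exact ((continuous_const.div hγtc (fun z => (hγtpos z).ne')).integral_hasStrictDerivAt 0 y).hasDerivAt
  have hMd : ∀ t : ℝ, HasDerivAt M (mt t) t := by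
    intro t
    exact (hmtc.integral_hasStrictDerivAt 0 t).hasDerivAt
  have hGmono : StrictMono G := by
    apply strictMono_of_deriv_pos
    intro y
    rw [(hGd y).deriv]
    exact div_pos one_pos (hγtpos y)
  have hMmono : StrictMono M := by
    apply strictMono_of_deriv_pos
    intro t
    rw [(hMd t).deriv]
    exact hmtpos t
  have hG0 : G 0 = 0 := intervalIntegral.integral_same
  have hM0 : M 0 = 0 := intervalIntegral.integral_same
  have hMT : M T₁ = l := by
    rw [hM, ← hT₁]
    apply intervalIntegral.integral_congr
    intro s hs
    rw [uIcc_of_le hT₁pos.le] at hs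
    simp [hmt, max_eq_left hs.1]
  have hGtop : Tendsto G atTop (nhds l) := by
    apply hl.congr'
    filter_upwards [eventually_ge_atTop (0:ℝ)] with y hy
    apply intervalIntegral.integral_congr
    intro z hz
    rw [uIcc_of_le hy] at hz
    simp [hγt, max_eq_left hz.1]
  have hGle : ∀ y, G y ≤ l := fun y => hGmono.monotone.ge_of_tendsto hGtop y
  have hGlt : ∀ y, G y < l := fun y => lt_of_lt_of_le (hGmono (lt_add_one y)) (hGle (y+1))
  have hGc : Continuous G := by
    have : Differentiable ℝ G := fun y => (hGd y).differentiableAt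
    exact this.continuous
  -- surjectivity onto Iio l
  have hsurj : ∀ y₀ < l, ∃ x, G x = y₀ := by
    intro y₀ hy₀
    obtain ⟨b, hb⟩ : ∃ b, y₀ < G b := by
      have h := hGtop.eventually (eventually_gt_nhds hy₀)
      rcases h.exists with ⟨b, hb⟩
      exact ⟨b, hb⟩
    set a : ℝ := (-(1 + |y₀|)) * γ 0 with ha
    have hγ0 : 0 < γ 0 := hγpos 0 (mem_Ici.2 le_rfl)
    have ha0 : a ≤ 0 := by
      apply mul_nonpos_of_nonpos_of_nonneg _ hγ0.le
      have : (0:ℝ) ≤ |y₀| := abs_nonneg _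
      linarith
    have hGa : G a = -(1 + |y₀|) := by
      have : G a = ∫ z in (0:ℝ)..a, 1 / γ 0 := by
        apply intervalIntegral.integral_congr
        intro z hz
        rw [uIcc_comm, uIcc_of_le ha0] at hz
        have : max z 0 = 0 := max_eq_right hz.2
        simp [hγt, this]
      rw [this, intervalIntegral.integral_const]
      rw [ha, smul_eq_mul, sub_zero, mul_one_div, mul_div_assoc, div_self hγ0.ne', mul_one]
    have haly : G a < y₀ := by
      rw [hGa]
      have : -|y₀| ≤ y₀ := neg_abs_le _
      linarith
    set b' := max a b with hb'
    have hab : a ≤ b' := le_max_left _ _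
    have hGb' : y₀ ≤ G b' := le_trans hb.le (hGmono.monotone (le_max_right _ _))
    have := intermediate_value_Icc hab hGc.continuousOn
    have hy0mem : y₀ ∈ Icc (G a) (G b') := ⟨haly.le, hGb'⟩
    rcases this hy0mem with ⟨x, _, hx⟩
    exact ⟨x, hx⟩
  set Ginv : ℝ → ℝ := fun y => if h : y < l then (hsurj y h).choose else 0 with hGinvdef
  have hGinv : ∀ y, y < l → G (Ginv y) = y := by
    intro y hy
    rw [hGinvdef]; simp only [hy, dif_pos]
    exact (hsurj y hy).choose_spec
  have hGinvG : ∀ x, Ginv (G x) = x := by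
    intro x
    exact hGmono.injective (hGinv _ (hGlt x))
  have hGinvc : ∀ y, y < l → ContinuousAt Ginv y := by
    intro y hy
    rw [Metric.continuousAt_iff]
    intro ε hε
    set x₀ := Ginv y with hx₀
    have hx₀y : G x₀ = y := hGinv y hy
    set δ := min (G (x₀ + ε) - y) (y - G (x₀ - ε)) with hδ
    have hδ1 : 0 < G (x₀ + ε) - y := by
      rw [← hx₀y]; have := hGmono (show x₀ < x₀ + ε by linarith); linarith
    have hδ2 : 0 < y - G (x₀ - ε) := by
      rw [← hx₀y]; have := hGmono (show x₀ - ε < x₀ by linarith); linarith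
    refine ⟨δ, lt_min hδ1 hδ2, ?_⟩
    intro y' hy'
    rw [Real.dist_eq] at hy'
    have hy'lt : y' < l := by
      have h1 : y' - y ≤ |y' - y| := le_abs_self _
      have h2 : |y' - y| < δ := hy'
      have h3 : δ ≤ G (x₀ + ε) - y := min_le_left _ _
      have := hGlt (x₀ + ε)
      linarith
    have hGy' : G (Ginv y') = y' := hGinv y' hy'lt
    rw [Real.dist_eq]
    have h1 : G (Ginv y') < G (x₀ + ε) := by
      rw [hGy']
      have h1 : y' - y ≤ |y' - y| := le_abs_self _
      have h3 : δ ≤ G (x₀ + ε) - y := min_le_left _ _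
      linarith
    have h2 : G (x₀ - ε) < G (Ginv y') := by
      rw [hGy']
      have h1 : y - y' ≤ |y' - y| := by rw [abs_sub_comm]; exact le_abs_self _
      have h3 : δ ≤ y - G (x₀ - ε) := min_le_right _ _
      linarith
    have l1 : Ginv y' < x₀ + ε := by
      by_contra h
      push_neg at h
      exact absurd (hGmono.monotone h) (not_le.2 h1)
    have l2 : x₀ - ε < Ginv y' := by
      by_contra h
      push_neg at h
      exact absurd (hGmono.monotone h) (not_le.2 h2)
    rw [abs_lt]
    constructor <;> linarith
  have hGinvd : ∀ y, y < l → HasDerivAt Ginv (γt (Ginv y)) y := by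
    intro y hy
    have h := HasDerivAt.of_local_left_inverse (hGinvc y hy) (hGd (Ginv y))
      (by have := hγtpos (Ginv y); positivity)
      (by filter_upwards [Iio_mem_nhds hy] with y' hy' using hGinv y' hy')
    have : (1 / γt (Ginv y))⁻¹ = γt (Ginv y) := by
      rw [one_div, inv_inv]
    rwa [this] at h
  set xh : ℝ → ℝ := fun t => Ginv (M t) with hxhdef
  have hMlt : ∀ t, t < T₁ → M t < l := by
    intro t ht
    rw [← hMT]
    exact hMmono ht
  have hxh : ∀ t, t < T₁ → G (xh t) = M t := fun t ht => hGinv _ (hMlt t ht)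
  have hxh0 : xh 0 = 0 := by
    rw [hxhdef]; simp only [hM0]
    rw [← hG0, hGinvG]
    exact hG0.symm
  have hxhd : ∀ t, t < T₁ → HasDerivAt xh (γt (xh t) * mt t) t := by
    intro t ht
    exact (hGinvd (M t) (hMlt t ht)).comp t (hMd t)
  have hxhpos : ∀ t, 0 ≤ t → t < T₁ → 0 ≤ xh t := by
    intro t ht0 ht
    have h1 : G 0 ≤ G (xh t) := by
      rw [hG0, hxh t ht, ← hM0]
      exact hMmono.monotone ht0
    exact (hGmono.le_iff_le).1 h1
  have hxhtop : Tendsto xh (nhdsWithin T₁ (Iio T₁)) atTop := by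
    rw [tendsto_atTop]
    intro R
    have hMc : ContinuousAt M T₁ := (hMd T₁).differentiableAt.continuousAt
    have h1 : Tendsto M (nhdsWithin T₁ (Iio T₁)) (nhds l) := by
      rw [← hMT]
      exact (hMc.continuousWithinAt).tendsto
    have h2 : ∀ᶠ t in nhdsWithin T₁ (Iio T₁), G R < M t :=
      h1.eventually (eventually_gt_nhds (hGlt R))
    filter_upwards [h2, self_mem_nhdsWithin] with t hGt (htT : t < T₁)
    have : G R < G (xh t) := by rwa [hxh t htT]
    exact (hGmono.lt_iff_lt.1 this).le
  exact ⟨G, M, xh, hGd, hGmono, hGlt, hG0, hGtop, hMd, hM0, hMT, hMmono, hxh, hxh0, hxhd, hxhpos, hxhtop⟩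

set_option maxHeartbeats 1000000 in
/-- Theorem 2 and Corollary 2, alternative of global solvability:
under (A), (B) with l = ∫₀^∞ dy/γ(y) < ∞ and ∫₀^{T₁} m = l, the main solution x
exists on [0,T₁) with |x(t)| ≤ xh(t), where xh solves the majorant Cauchy problem
and blows up at T₁; and either x extends continuously (as a solution) beyond T₁,
or some solution extension of x blows up at a point ≥ T₁. -/
theorem stmt17 (K K' : ℝ → ℝ → ℝ → ℝ) (m γ γ' : ℝ → ℝ) (l T₁ : ℝ)
    (hKc : ContinuousOn (fun p : ℝ × ℝ × ℝ => K p.1 p.2.1 p.2.2)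
      {p : ℝ × ℝ × ℝ | 0 ≤ p.2.1 ∧ p.2.1 ≤ p.1})
    (hKd : ∀ t s x : ℝ, 0 ≤ s → s ≤ t → HasDerivAt (fun y => K t s y) (K' t s x) x)
    (hmc : Continuous m) (hmpos : ∀ s ∈ Ici (0:ℝ), 0 < m s)
    (hmmono : MonotoneOn m (Ici (0:ℝ)))
    (hγc : Continuous γ) (hγpos : ∀ x ∈ Ici (0:ℝ), 0 < γ x)
    (hγmono : MonotoneOn γ (Ici (0:ℝ))) (hγconv : ConvexOn ℝ (Ici (0:ℝ)) γ)
    (hγd : ∀ x ∈ Ici (0:ℝ), HasDerivAt γ (γ' x) x) (hγ0 : 0 < γ 0)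
    (hbound : ∀ t s x : ℝ, 0 ≤ s → s ≤ t → |K t s x| ≤ m s * γ |x|)
    (hbound' : ∀ t s x : ℝ, 0 ≤ s → s ≤ t → |K' t s x| ≤ m s * γ' |x|)
    (hl : Tendsto (fun x => ∫ y in (0:ℝ)..x, 1 / γ y) atTop (nhds l))
    (hT₁pos : 0 < T₁) (hT₁ : (∫ s in (0:ℝ)..T₁, m s) = l) :
    ∃ x : ℝ → ℝ, ContinuousOn x (Ico 0 T₁) ∧
      (∀ t ∈ Ico (0:ℝ) T₁, x t = ∫ s in (0:ℝ)..t, K t s (x s)) ∧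
      (∃ xh : ℝ → ℝ, xh 0 = 0 ∧
        (∀ t ∈ Ico (0:ℝ) T₁, HasDerivAt xh (m t * γ (xh t)) t) ∧
        (∀ t ∈ Ico (0:ℝ) T₁, |x t| ≤ xh t) ∧
        Tendsto xh (nhdsWithin T₁ (Iio T₁)) atTop) ∧
      ((∃ T₂ > T₁, ∃ y : ℝ → ℝ, ContinuousOn y (Ico 0 T₂) ∧
          EqOn y x (Ico 0 T₁) ∧
          ∀ t ∈ Ico (0:ℝ) T₂, y t = ∫ s in (0:ℝ)..t, K t s (y s)) ∨
        (∃ T₂ ≥ T₁, ∃ y : ℝ → ℝ, ContinuousOn y (Ico 0 T₂) ∧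
          EqOn y x (Ico 0 T₁) ∧
          (∀ t ∈ Ico (0:ℝ) T₂, y t = ∫ s in (0:ℝ)..t, K t s (y s)) ∧
          Tendsto (fun t => |y t|) (nhdsWithin T₂ (Iio T₂)) atTop)) := by
  classical
  obtain ⟨G, M, xh, hGd, hGmono, hGlt, hG0, hGtop, hMd, hM0, hMT, hMmono, hxhG, hxh0,
      hxhd, hxhpos, hxhtop⟩ :=
    majorant_solution m γ l T₁ hmc hmpos hγc hγpos hl hT₁pos hT₁
  have hγnonneg : ∀ y : ℝ, 0 ≤ y → 0 ≤ γ y := fun y hy => (hγpos y hy).le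
  have hm0pos : 0 < m 0 := hmpos 0 (mem_Ici.2 le_rfl)
  have hγ'nonneg : ∀ y : ℝ, 0 ≤ y → 0 ≤ γ' y := by
    intro y hy
    have h1 : 0 ≤ m 0 * γ' |y| := le_trans (abs_nonneg _) (hbound' 0 0 y le_rfl le_rfl)
    rw [abs_of_nonneg hy] at h1
    nlinarith
  have hγ'mono : ∀ a b : ℝ, 0 ≤ a → a ≤ b → γ' a ≤ γ' b := by
    intro a b ha hab
    rcases eq_or_lt_of_le hab with rfl | h
    · exact le_rfl
    · have h1 : γ' a ≤ slope γ a b :=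
        hγconv.le_slope_of_hasDerivAt (mem_Ici.2 ha) (mem_Ici.2 (ha.trans hab)) h
          (hγd a (mem_Ici.2 ha))
      have h2 : slope γ a b ≤ γ' b :=
        hγconv.slope_le_of_hasDerivAt (mem_Ici.2 ha) (mem_Ici.2 (ha.trans hab)) h
          (hγd b (mem_Ici.2 (ha.trans hab)))
      exact h1.trans h2
  have hγunbdd : ∀ R : ℝ, ∃ Y : ℝ, 0 ≤ Y ∧ γ R < γ Y := by
    intro R
    by_contra hcon
    push_neg at hcon
    have hγRpos : 0 < γ R := lt_of_lt_of_le (hγpos 0 (mem_Ici.2 le_rfl)) (hcon 0 le_rfl)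
    have hbig : ∀ x : ℝ, 0 ≤ x → x / γ R ≤ ∫ y in (0:ℝ)..x, 1 / γ y := by
      intro x hx
      have hint : IntervalIntegrable (fun y => 1 / γ y) MeasureTheory.volume 0 x := by
        apply ContinuousOn.intervalIntegrable
        apply ContinuousOn.div continuousOn_const hγc.continuousOn
        intro y hy
        rw [uIcc_of_le hx] at hy
        exact (hγpos y (mem_Ici.2 hy.1)).ne'
      calc x / γ R = ∫ _y in (0:ℝ)..x, 1 / γ R := by
            rw [intervalIntegral.integral_const]; simp [smul_eq_mul]; ring
        _ ≤ ∫ y in (0:ℝ)..x, 1 / γ y := by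
            apply intervalIntegral.integral_mono_on hx intervalIntegrable_const hint
            intro y hy
            exact one_div_le_one_div_of_le (hγpos y (mem_Ici.2 hy.1)) (hcon y hy.1)
    have h2 : Tendsto (fun x => ∫ y in (0:ℝ)..x, 1 / γ y) atTop atTop := by
      exact tendsto_atTop_mono' atTop
        (by filter_upwards [eventually_ge_atTop (0:ℝ)] with x hx using hbig x hx)
        (Tendsto.atTop_div_const hγRpos tendsto_id)
    exact (h2.not_tendsto (disjoint_nhds_atTop l).symm) hl
  -- monotonicity of the majorant
  have hxhmono : ∀ a b : ℝ, a ≤ b → b < T₁ → xh a ≤ xh b := by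
    intro a b hab hb
    have h1 : G (xh a) ≤ G (xh b) := by
      rw [hxhG a (lt_of_le_of_lt hab hb), hxhG b hb]
      exact hMmono.monotone hab
    exact hGmono.le_iff_le.1 h1
  -- extended kernel
  set Kt : ℝ → ℝ → ℝ → ℝ := fun t s v => K (max t (max s 0)) (max s 0) v with hKtdef
  have hKtc : Continuous (fun p : ℝ × ℝ × ℝ => Kt p.1 p.2.1 p.2.2) := by
    have hφ : Continuous (fun p : ℝ × ℝ × ℝ =>
        ((max p.1 (max p.2.1 0), max p.2.1 0, p.2.2) : ℝ × ℝ × ℝ)) := by fun_prop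
    exact hKc.comp_continuous hφ (fun p => ⟨le_max_right _ _, le_max_right _ _⟩)
  have hKteq : ∀ t s v : ℝ, 0 ≤ s → s ≤ t → Kt t s v = K t s v := by
    intro t s v hs hst
    rw [hKtdef]
    simp only [max_eq_left hs, max_eq_left hst]
  have hKtcomp : ∀ (g : ℝ → ℝ) (S : Set ℝ) (t : ℝ), ContinuousOn g S →
      ContinuousOn (fun s => Kt t s (g s)) S := by
    intro g S t hg
    exact hKtc.comp_continuousOn (continuousOn_const.prodMk (continuousOn_id.prodMk hg))
  -- clamping
  set clamp : ℝ → ℝ → ℝ := fun R v => max (-R) (min v R) with hclampdef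
  have hclamp_lip : ∀ R a b : ℝ, |clamp R a - clamp R b| ≤ |a - b| := by
    intro R a b
    have h1 : |max (min a R) (-R) - max (min b R) (-R)| ≤ |min a R - min b R| :=
      abs_max_sub_max_le_abs _ _ _
    have h2 : |min a R - min b R| ≤ max |a - b| |R - R| := abs_min_sub_min_le_max _ _ _ _
    rw [hclampdef]
    simp only [max_comm (-R)]
    refine h1.trans (h2.trans ?_)
    simp [abs_nonneg]
  have hclamp_mem : ∀ R v : ℝ, 0 ≤ R → |clamp R v| ≤ R := by
    intro R v hR
    rw [abs_le, hclampdef]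
    constructor
    · exact le_max_left _ _
    · exact max_le (by linarith) (min_le_right _ _)
  have hclamp_abs_le : ∀ R v : ℝ, 0 ≤ R → |clamp R v| ≤ |v| := by
    intro R v hR
    rw [abs_le, hclampdef]
    refine ⟨le_max_of_le_right (le_min (neg_abs_le v) (by linarith [abs_nonneg v])), ?_⟩
    exact max_le (by linarith [abs_nonneg v]) (le_trans (min_le_left _ _) (le_abs_self v))
  have hclamp_eq : ∀ R v : ℝ, |v| ≤ R → clamp R v = v := by
    intro R v hv
    rw [abs_le] at hv
    rw [hclampdef]
    simp only [min_eq_left hv.2, max_eq_right hv.1]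
  -- truncated kernels
  have hKC : ∀ A R : ℝ, 0 ≤ A → 0 ≤ R →
      (Continuous (fun p : ℝ × ℝ × ℝ => Kt (min p.1 A) (min p.2.1 A) (clamp R p.2.2)) ∧
       (∀ t s v : ℝ, |Kt (min t A) (min s A) (clamp R v)| ≤ m A * γ R) ∧
       (∀ t s a b : ℝ, |Kt (min t A) (min s A) (clamp R a) - Kt (min t A) (min s A) (clamp R b)|
          ≤ m A * γ' R * |a - b|)) := by
    intro A R hA hR
    have hmA : (0:ℝ) ≤ m A := (hmpos A (mem_Ici.2 hA)).le
    have hσfacts : ∀ t s : ℝ, 0 ≤ max (min s A) 0 ∧ max (min s A) 0 ≤ max (min t A) (max (min s A) 0)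
        ∧ max (min s A) 0 ≤ A := by
      intro t s
      exact ⟨le_max_right _ _, le_max_right _ _, max_le (min_le_right _ _) hA⟩
    have hmσ : ∀ s : ℝ, m (max (min s A) 0) ≤ m A := by
      intro s
      exact hmmono (mem_Ici.2 (le_max_right _ _)) (mem_Ici.2 hA) (max_le (min_le_right _ _) hA)
    refine ⟨?_, ?_, ?_⟩
    · have hclampc : Continuous (fun v : ℝ => clamp R v) := by
        rw [hclampdef]; fun_prop
      have hφ : Continuous (fun p : ℝ × ℝ × ℝ =>
          ((min p.1 A, min p.2.1 A, clamp R p.2.2) : ℝ × ℝ × ℝ)) := by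
        apply Continuous.prodMk (by fun_prop)
        apply Continuous.prodMk (by fun_prop)
        exact hclampc.comp (by fun_prop)
      exact hKtc.comp hφ
    · intro t s v
      obtain ⟨hσ0, hστ, hσA⟩ := hσfacts t s
      have h1 : |K (max (min t A) (max (min s A) 0)) (max (min s A) 0) (clamp R v)|
          ≤ m (max (min s A) 0) * γ |clamp R v| := hbound _ _ _ hσ0 hστ
      refine h1.trans (mul_le_mul (hmσ s) ?_ (hγnonneg _ (abs_nonneg _)) hmA)
      exact hγmono (mem_Ici.2 (abs_nonneg _)) (mem_Ici.2 hR) (hclamp_mem R v hR)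
    · intro t s a b
      obtain ⟨hσ0, hστ, hσA⟩ := hσfacts t s
      have key := Convex.norm_image_sub_le_of_norm_hasDerivWithin_le
        (f := fun y => K (max (min t A) (max (min s A) 0)) (max (min s A) 0) y)
        (f' := fun y => K' (max (min t A) (max (min s A) 0)) (max (min s A) 0) y)
        (s := Icc (-R) R) (C := m A * γ' R)
        (fun y _ => (hKd _ _ y hσ0 hστ).hasDerivWithinAt)
        (fun y hy => by
          rw [Real.norm_eq_abs]
          refine (hbound' _ _ y hσ0 hστ).trans
            (mul_le_mul (hmσ s) (hγ'mono _ _ (abs_nonneg _) (abs_le.2 ⟨hy.1, hy.2⟩))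
              (hγ'nonneg _ (abs_nonneg _)) hmA))
        (convex_Icc _ _)
        (abs_le.1 (hclamp_mem R b hR) |> fun h => ⟨h.1, h.2⟩)
        (abs_le.1 (hclamp_mem R a hR) |> fun h => ⟨h.1, h.2⟩)
      rw [Real.norm_eq_abs, Real.norm_eq_abs] at key
      refine key.trans ?_
      exact mul_le_mul_of_nonneg_left (hclamp_lip R a b)
        (mul_nonneg hmA (hγ'nonneg R hR))
  -- solution on [0, c] for every c < T₁
  have hsol : ∀ c : ℝ, 0 < c → c < T₁ → ∃ z : ℝ → ℝ, Continuous z ∧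
      (∀ t ∈ Icc (0:ℝ) c, z t = ∫ s in (0:ℝ)..t, Kt t s (z s)) ∧
      (∀ t ∈ Icc (0:ℝ) c, |z t| ≤ xh t) := by
    intro c hc0 hcT
    have hc0' : (0:ℝ) ≤ c := hc0.le
    have hxhc0 : 0 ≤ xh c := hxhpos c hc0' hcT
    set R := xh c + 1 with hRdef
    have hR0 : (0:ℝ) ≤ R := by rw [hRdef]; linarith
    obtain ⟨hKCc, hKCb, hKCl⟩ := hKC c R hc0' hR0
    have hCpos : 0 ≤ m c * γ R := mul_nonneg (hmpos c (mem_Ici.2 hc0')).le (hγnonneg R hR0)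
    have hΛpos : 0 ≤ m c * γ' R := mul_nonneg (hmpos c (mem_Ici.2 hc0')).le (hγ'nonneg R hR0)
    obtain ⟨z, hzc, hzeq⟩ := volterra_exists
      (fun t s v => Kt (min t c) (min s c) (clamp R v)) _ _ hCpos hΛpos hKCc hKCb hKCl
    set ρ : ℝ → ℝ := fun s => m s * γ |clamp R (z s)| with hρdef
    have hρc : Continuous ρ := by
      rw [hρdef, hclampdef]
      exact hmc.mul (hγc.comp ((continuous_const.max (hzc.min continuous_const)).abs))
    set w : ℝ → ℝ := fun t => ∫ s in (0:ℝ)..t, ρ s with hwdef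
    have hwd : ∀ t : ℝ, HasDerivAt w (ρ t) t :=
      fun t => (hρc.integral_hasStrictDerivAt 0 t).hasDerivAt
    have hwc : Continuous w := by
      have : Differentiable ℝ w := fun t => (hwd t).differentiableAt
      exact this.continuous
    have hzlew : ∀ t ∈ Icc (0:ℝ) c, |z t| ≤ w t := by
      intro t ht
      rw [hzeq t ht.1]
      have hKint : IntervalIntegrable (fun s => Kt (min t c) (min s c) (clamp R (z s)))
          MeasureTheory.volume 0 t := by
        apply Continuous.intervalIntegrable
        exact hKCc.comp (continuous_const.prodMk (continuous_id.prodMk hzc))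
      calc |∫ s in (0:ℝ)..t, Kt (min t c) (min s c) (clamp R (z s))|
          ≤ ∫ s in (0:ℝ)..t, |Kt (min t c) (min s c) (clamp R (z s))| := by
            simpa using intervalIntegral.abs_integral_le_integral_abs ht.1
              (f := fun s => Kt (min t c) (min s c) (clamp R (z s)))
        _ ≤ ∫ s in (0:ℝ)..t, ρ s := by
            apply intervalIntegral.integral_mono_on ht.1 hKint.abs
              (hρc.intervalIntegrable _ _)
            intro s hs
            have hminc : min t c = t := min_eq_left ht.2
            have hmins : min s c = s := min_eq_left (hs.2.trans ht.2)
            rw [hminc, hmins, hKteq t s _ hs.1 hs.2]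
            exact hbound t s _ hs.1 hs.2
        _ = w t := rfl
    have hwnonneg : ∀ t ∈ Icc (0:ℝ) c, 0 ≤ w t :=
      fun t ht => (abs_nonneg _).trans (hzlew t ht)
    have hMc : Continuous M := by
      have : Differentiable ℝ M := fun t => (hMd t).differentiableAt
      exact this.continuous
    have hGc : Continuous G := by
      have : Differentiable ℝ G := fun y => (hGd y).differentiableAt
      exact this.continuous
    have hF2d : ∀ t : ℝ, HasDerivAt (fun u => M u - G (w u))
        (m (max t 0) - 1 / γ (max (w t) 0) * ρ t) t :=
      fun t => (hMd t).sub ((hGd (w t)).comp t (hwd t))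
    have hF2mono : MonotoneOn (fun u => M u - G (w u)) (Icc 0 c) := by
      apply monotoneOn_of_deriv_nonneg (convex_Icc 0 c)
        (show ContinuousOn (fun u => M u - G (w u)) (Icc 0 c) from
          (hMc.sub (hGc.comp hwc)).continuousOn)
      · intro t _
        exact (hF2d t).differentiableAt.differentiableWithinAt
      · intro t ht
        rw [interior_Icc] at ht
        have htmem : t ∈ Icc (0:ℝ) c := Ioo_subset_Icc_self ht
        rw [(hF2d t).deriv, max_eq_left ht.1.le, max_eq_left (hwnonneg t htmem)]
        have hγw : 0 < γ (w t) := hγpos _ (mem_Ici.2 (hwnonneg t htmem))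
        have hρle : ρ t ≤ m t * γ (w t) := by
          rw [hρdef]
          apply mul_le_mul_of_nonneg_left _ (hmpos t (mem_Ici.2 ht.1.le)).le
          exact hγmono (mem_Ici.2 (abs_nonneg _)) (mem_Ici.2 (hwnonneg t htmem))
            ((hclamp_abs_le R (z t) hR0).trans (hzlew t htmem))
        rw [sub_nonneg, one_div]
        calc (γ (w t))⁻¹ * ρ t ≤ (γ (w t))⁻¹ * (m t * γ (w t)) :=
              mul_le_mul_of_nonneg_left hρle (inv_nonneg.2 hγw.le)
          _ = m t := by field_simp
    have hwle : ∀ t ∈ Icc (0:ℝ) c, w t ≤ xh t := by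
      intro t ht
      have h1 : M 0 - G (w 0) ≤ M t - G (w t) := hF2mono ⟨le_rfl, hc0'⟩ ht ht.1
      have hw0 : w 0 = 0 := intervalIntegral.integral_same
      rw [hM0, hw0, hG0] at h1
      have h2 : G (w t) ≤ M t := by linarith
      rw [← hxhG t (lt_of_le_of_lt ht.2 hcT)] at h2
      exact hGmono.le_iff_le.1 h2
    have hzxh : ∀ t ∈ Icc (0:ℝ) c, |z t| ≤ xh t :=
      fun t ht => (hzlew t ht).trans (hwle t ht)
    refine ⟨z, hzc, ?_, hzxh⟩
    intro t ht
    rw [hzeq t ht.1]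
    apply intervalIntegral.integral_congr
    intro s hs
    rw [uIcc_of_le ht.1] at hs
    have hsc : s ≤ c := hs.2.trans ht.2
    have h1 : clamp R (z s) = z s := by
      apply hclamp_eq
      refine (hzxh s ⟨hs.1, hsc⟩).trans ?_
      have := hxhmono s c hsc hcT
      rw [hRdef]; linarith
    show Kt (min t c) (min s c) (clamp R (z s)) = Kt t s (z s)
    rw [min_eq_left ht.2, min_eq_left hsc, h1]
  choose! Z hZc hZeq hZb using hsol
  have lipKt : ∀ B : ℝ, 0 ≤ B → ∀ t s a b : ℝ, 0 ≤ s → s ≤ t → |a| ≤ B → |b| ≤ B →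
      |Kt t s a - Kt t s b| ≤ m s * γ' B * |a - b| := by
    intro B hB t s a b hs hst haB hbB
    have key := Convex.norm_image_sub_le_of_norm_hasDerivWithin_le
      (f := fun y => K t s y) (f' := fun y => K' t s y) (s := Icc (-B) B) (C := m s * γ' B)
      (fun y _ => (hKd t s y hs hst).hasDerivWithinAt)
      (fun y hy => by
        rw [Real.norm_eq_abs]
        exact (hbound' t s y hs hst).trans
          (mul_le_mul_of_nonneg_left
            (hγ'mono _ _ (abs_nonneg _) (abs_le.2 ⟨hy.1, hy.2⟩))
            (hmpos s (mem_Ici.2 hs)).le))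
      (convex_Icc _ _) (abs_le.1 hbB) (abs_le.1 haB)
    rw [Real.norm_eq_abs, Real.norm_eq_abs] at key
    rw [hKteq t s a hs hst, hKteq t s b hs hst]
    exact key
  have hagree : ∀ c c' : ℝ, 0 < c → c ≤ c' → c' < T₁ → EqOn (Z c) (Z c') (Icc 0 c) := by
    intro c c' hc0 hcc hc'T
    have hcT : c < T₁ := lt_of_le_of_lt hcc hc'T
    have hc'0 : 0 < c' := lt_of_lt_of_le hc0 hcc
    have hB0 : 0 ≤ xh c := hxhpos c hc0.le hcT
    have hΛ0 : 0 ≤ m c * γ' (xh c) :=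
      mul_nonneg (hmpos c (mem_Ici.2 hc0.le)).le (hγ'nonneg _ hB0)
    apply volterra_unique Kt c (m c * γ' (xh c)) hc0.le hΛ0 _ _
      (hZc c hc0 hcT).continuousOn (hZc c' hc'0 hc'T).continuousOn
    · intro t _
      exact hKtcomp _ _ t (hZc c hc0 hcT).continuousOn
    · intro t _
      exact hKtcomp _ _ t (hZc c' hc'0 hc'T).continuousOn
    · intro t htIcc s hsIcc
      have hsc : s ≤ c := hsIcc.2.trans htIcc.2
      have hZcb : |Z c s| ≤ xh c :=
        (hZb c hc0 hcT s ⟨hsIcc.1, hsc⟩).trans (hxhmono s c hsc hcT)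
      have hZc'b : |Z c' s| ≤ xh c :=
        (hZb c' hc'0 hc'T s ⟨hsIcc.1, hsc.trans hcc⟩).trans (hxhmono s c hsc hcT)
      refine (lipKt (xh c) hB0 t s _ _ hsIcc.1 hsIcc.2 hZcb hZc'b).trans ?_
      apply mul_le_mul_of_nonneg_right _ (abs_nonneg _)
      exact mul_le_mul_of_nonneg_right
        (hmmono (mem_Ici.2 hsIcc.1) (mem_Ici.2 hc0.le) hsc) (hγ'nonneg _ hB0)
    · intro t htIcc
      exact hZeq c hc0 hcT t htIcc
    · intro t htIcc
      exact hZeq c' hc'0 hc'T t ⟨htIcc.1, htIcc.2.trans hcc⟩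
  set x : ℝ → ℝ := fun t => Z ((t + T₁)/2) t with hxdef
  have hcprop : ∀ t : ℝ, 0 ≤ t → t < T₁ →
      0 < (t + T₁)/2 ∧ (t + T₁)/2 < T₁ ∧ t ≤ (t + T₁)/2 := by
    intro t ht0 htT
    exact ⟨by linarith, by linarith, by linarith⟩
  have hxZ : ∀ c : ℝ, 0 < c → c < T₁ → ∀ t : ℝ, 0 ≤ t → t ≤ c → x t = Z c t := by
    intro c hc0 hcT t ht0 htc
    obtain ⟨h1, h2, h3⟩ := hcprop t ht0 (lt_of_le_of_lt htc hcT)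
    rcases le_total ((t + T₁)/2) c with hle | hle
    · exact hagree _ c h1 hle hcT ⟨ht0, h3⟩
    · exact (hagree c _ hc0 hle h2 ⟨ht0, htc⟩).symm
  have hxcont : ContinuousOn x (Ico 0 T₁) := by
    intro t₀ ht₀
    obtain ⟨h1, h2, h3⟩ := hcprop t₀ ht₀.1 ht₀.2
    have h3' : t₀ < (t₀ + T₁)/2 := by
      have := ht₀.2; linarith
    have hbase : ContinuousWithinAt (Z ((t₀ + T₁)/2)) (Ico 0 T₁) t₀ :=
      ((hZc _ h1 h2).continuousAt).continuousWithinAt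
    apply hbase.congr_of_eventuallyEq
    · filter_upwards [inter_mem self_mem_nhdsWithin
        (mem_nhdsWithin_of_mem_nhds (Iio_mem_nhds h3'))] with s hs
      exact hxZ _ h1 h2 s hs.1.1 hs.2.le
    · exact hxZ _ h1 h2 t₀ ht₀.1 h3
  have hxeqKt : ∀ t ∈ Ico (0:ℝ) T₁, x t = ∫ s in (0:ℝ)..t, Kt t s (x s) := by
    intro t ht
    obtain ⟨h1, h2, h3⟩ := hcprop t ht.1 ht.2
    rw [hxZ _ h1 h2 t ht.1 h3, hZeq _ h1 h2 t ⟨ht.1, h3⟩]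
    apply intervalIntegral.integral_congr
    intro s hs
    rw [uIcc_of_le ht.1] at hs
    show Kt t s (Z ((t + T₁)/2) s) = Kt t s (x s)
    rw [hxZ _ h1 h2 s hs.1 (hs.2.trans h3)]
  have hxeqK : ∀ t ∈ Ico (0:ℝ) T₁, x t = ∫ s in (0:ℝ)..t, K t s (x s) := by
    intro t ht
    rw [hxeqKt t ht]
    apply intervalIntegral.integral_congr
    intro s hs
    rw [uIcc_of_le ht.1] at hs
    exact hKteq t s (x s) hs.1 hs.2
  have hxb : ∀ t ∈ Ico (0:ℝ) T₁, |x t| ≤ xh t := by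
    intro t ht
    obtain ⟨h1, h2, h3⟩ := hcprop t ht.1 ht.2
    rw [hxZ _ h1 h2 t ht.1 h3]
    exact hZb _ h1 h2 t ⟨ht.1, h3⟩
  have hxhderIco : ∀ t ∈ Ico (0:ℝ) T₁, HasDerivAt xh (m t * γ (xh t)) t := by
    intro t ht
    have h := hxhd t ht.2
    rw [max_eq_left ht.1, max_eq_left (hxhpos t ht.1 ht.2)] at h
    rwa [mul_comm] at h
  refine ⟨x, hxcont, hxeqK, ⟨xh, hxh0, hxhderIco, hxb, hxhtop⟩, ?_⟩
  -- the dichotomy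
  have hMc : Continuous M := by
    have : Differentiable ℝ M := fun t => (hMd t).differentiableAt
    exact this.continuous
  have hGc : Continuous G := by
    have : Differentiable ℝ G := fun y => (hGd y).differentiableAt
    exact this.continuous
  set ρx : ℝ → ℝ := fun s => m s * γ |x s| with hρxdef
  have hρxcont : ContinuousOn ρx (Ico 0 T₁) :=
    hmc.continuousOn.mul (hγc.comp_continuousOn hxcont.abs)
  set u : ℝ → ℝ := fun t => ∫ s in (0:ℝ)..t, ρx s with hudef
  have hIcoSub : ∀ t : ℝ, t < T₁ → Icc (0:ℝ) t ⊆ Ico 0 T₁ :=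
    fun t htT s hs => ⟨hs.1, lt_of_le_of_lt hs.2 htT⟩
  have hρxint : ∀ t : ℝ, 0 ≤ t → t < T₁ →
      IntervalIntegrable ρx MeasureTheory.volume 0 t := by
    intro t ht0 htT
    exact (hρxcont.mono (hIcoSub t htT)).intervalIntegrable_of_Icc ht0
  have hρxnonneg : ∀ s : ℝ, 0 ≤ s → 0 ≤ ρx s :=
    fun s hs => mul_nonneg (hmpos s (mem_Ici.2 hs)).le (hγnonneg _ (abs_nonneg _))
  have hu0 : u 0 = 0 := intervalIntegral.integral_same
  have hxleu : ∀ t ∈ Ico (0:ℝ) T₁, |x t| ≤ u t := by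
    intro t ht
    rw [hxeqKt t ht]
    have hKint : IntervalIntegrable (fun s => Kt t s (x s)) MeasureTheory.volume 0 t :=
      (hKtcomp x (Icc 0 t) t (hxcont.mono (hIcoSub t ht.2))).intervalIntegrable_of_Icc ht.1
    calc |∫ s in (0:ℝ)..t, Kt t s (x s)| ≤ ∫ s in (0:ℝ)..t, |Kt t s (x s)| := by
          simpa using intervalIntegral.abs_integral_le_integral_abs ht.1
            (f := fun s => Kt t s (x s))
      _ ≤ ∫ s in (0:ℝ)..t, ρx s := by
          apply intervalIntegral.integral_mono_on ht.1 hKint.abs (hρxint t ht.1 ht.2)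
          intro s hs
          rw [hKteq t s (x s) hs.1 hs.2]
          exact hbound t s (x s) hs.1 hs.2
      _ = u t := rfl
  have hunonneg : ∀ t ∈ Ico (0:ℝ) T₁, 0 ≤ u t :=
    fun t ht => (abs_nonneg _).trans (hxleu t ht)
  have humono : ∀ a b : ℝ, 0 ≤ a → a ≤ b → b < T₁ → u a ≤ u b := by
    intro a b ha hab hbT
    have hint2 : IntervalIntegrable ρx MeasureTheory.volume a b := by
      apply ContinuousOn.intervalIntegrable
      apply hρxcont.mono
      rw [uIcc_of_le hab]
      exact fun s hs => ⟨ha.trans hs.1, lt_of_le_of_lt hs.2 hbT⟩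
    have h1 : u a + ∫ s in a..b, ρx s = u b :=
      intervalIntegral.integral_add_adjacent_intervals
        (hρxint a ha (lt_of_le_of_lt hab hbT)) hint2
    have h2 : 0 ≤ ∫ s in a..b, ρx s :=
      intervalIntegral.integral_nonneg hab (fun s hs => hρxnonneg s (ha.trans hs.1))
    linarith
  have hud : ∀ t ∈ Ioo (0:ℝ) T₁, HasDerivAt u (ρx t) t := by
    intro t ht
    have hsub : Ioo (0:ℝ) T₁ ⊆ Ico 0 T₁ := fun s hs => ⟨hs.1.le, hs.2⟩
    have hco : ContinuousOn ρx (Ioo 0 T₁) := hρxcont.mono hsub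
    exact intervalIntegral.integral_hasDerivAt_right (hρxint t ht.1.le ht.2)
      (hco.stronglyMeasurableAtFilter isOpen_Ioo t ht)
      (hco.continuousAt (IsOpen.mem_nhds isOpen_Ioo ht))
  by_cases hbd : ∃ B : ℝ, ∀ t ∈ Ico (0:ℝ) T₁, u t ≤ B
  · -- bounded : the solution extends beyond T₁
    obtain ⟨B₀, hB₀⟩ := hbd
    set B := max B₀ 0 with hBdef
    have hB0 : (0:ℝ) ≤ B := le_max_right _ _
    have hxB : ∀ t ∈ Ico (0:ℝ) T₁, |x t| ≤ B :=
      fun t ht => (hxleu t ht).trans ((hB₀ t ht).trans (le_max_left _ _))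
    set C₁ := m T₁ * γ B with hC₁def
    have hC₁0 : 0 ≤ C₁ := mul_nonneg (hmpos T₁ (mem_Ici.2 hT₁pos.le)).le (hγnonneg B hB0)
    have hKbd : ∀ t s : ℝ, 0 ≤ s → s ≤ t → t < T₁ → |Kt t s (x s)| ≤ C₁ := by
      intro t s hs hst htT
      have hsIco : s ∈ Ico (0:ℝ) T₁ := ⟨hs, lt_of_le_of_lt hst htT⟩
      rw [hKteq t s (x s) hs hst]
      refine (hbound t s (x s) hs hst).trans ?_
      apply mul_le_mul (hmmono (mem_Ici.2 hs) (mem_Ici.2 hT₁pos.le) (hsIco.2.trans_le le_rfl).le)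
        (hγmono (mem_Ici.2 (abs_nonneg _)) (mem_Ici.2 hB0) (hxB s hsIco))
        (hγnonneg _ (abs_nonneg _)) (hmpos T₁ (mem_Ici.2 hT₁pos.le)).le
    -- uniform continuity of the kernel on a compact box
    have hQcomp : IsCompact ((Icc (0:ℝ) T₁) ×ˢ (Icc (0:ℝ) T₁) ×ˢ (Icc (-B) B)) :=
      isCompact_Icc.prod (isCompact_Icc.prod isCompact_Icc)
    have hKtu := hQcomp.uniformContinuousOn_of_continuous
      (hKtc.continuousOn (s := (Icc (0:ℝ) T₁) ×ˢ (Icc (0:ℝ) T₁) ×ˢ (Icc (-B) B)))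
    rw [Metric.uniformContinuousOn_iff] at hKtu
    -- increments of x are small near T₁
    have hinc : ∀ ε : ℝ, 0 < ε → ∃ δ : ℝ, 0 < δ ∧ ∀ t' t : ℝ, 0 ≤ t' → t' ≤ t → t < T₁ →
        t - t' < δ → |x t - x t'| < ε := by
      intro ε hε
      have hε' : 0 < ε / (2 * (T₁ + 1)) := by positivity
      obtain ⟨δ₁, hδ₁0, hδ₁⟩ := hKtu (ε / (2 * (T₁ + 1))) hε'
      refine ⟨min δ₁ (ε / (2 * (C₁ + 1))), lt_min hδ₁0 (by positivity), ?_⟩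
      intro t' t h0 htt' htT hlt
      have ht'T : t' < T₁ := lt_of_le_of_lt htt' htT
      have h0t : (0:ℝ) ≤ t := h0.trans htt'
      have hcont : ContinuousOn (fun s => Kt t s (x s)) (Icc 0 t) :=
        hKtcomp x _ t (hxcont.mono (hIcoSub t htT))
      have hcont' : ContinuousOn (fun s => Kt t' s (x s)) (Icc 0 t') :=
        hKtcomp x _ t' (hxcont.mono (hIcoSub t' ht'T))
      have hi1 : IntervalIntegrable (fun s => Kt t s (x s)) MeasureTheory.volume 0 t' :=
        (hcont.mono (Icc_subset_Icc le_rfl htt')).intervalIntegrable_of_Icc h0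
      have hi2 : IntervalIntegrable (fun s => Kt t s (x s)) MeasureTheory.volume t' t := by
        apply ContinuousOn.intervalIntegrable
        apply hcont.mono
        rw [uIcc_of_le htt']
        exact Icc_subset_Icc h0 le_rfl
      have hi3 : IntervalIntegrable (fun s => Kt t' s (x s)) MeasureTheory.volume 0 t' :=
        hcont'.intervalIntegrable_of_Icc h0
      have e1 : x t - x t' = (∫ s in (0:ℝ)..t', (Kt t s (x s) - Kt t' s (x s)))
          + ∫ s in t'..t, Kt t s (x s) := by
        rw [hxeqKt t ⟨h0t, htT⟩, hxeqKt t' ⟨h0, ht'T⟩,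
          intervalIntegral.integral_sub hi1 hi3,
          ← intervalIntegral.integral_add_adjacent_intervals hi1 hi2]
        ring
      have hb1 : |∫ s in (0:ℝ)..t', (Kt t s (x s) - Kt t' s (x s))| ≤ T₁ * (ε / (2 * (T₁ + 1))) := by
        calc |∫ s in (0:ℝ)..t', (Kt t s (x s) - Kt t' s (x s))|
            ≤ ∫ s in (0:ℝ)..t', |Kt t s (x s) - Kt t' s (x s)| := by
              simpa using intervalIntegral.abs_integral_le_integral_abs h0
                (f := fun s => Kt t s (x s) - Kt t' s (x s))
          _ ≤ ∫ _s in (0:ℝ)..t', (ε / (2 * (T₁ + 1))) := by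
              apply intervalIntegral.integral_mono_on h0
                ((hi1.sub hi3).abs) intervalIntegrable_const
              intro s hs
              have hsT : s < T₁ := lt_of_le_of_lt (hs.2.trans htt') htT
              have hp : ((t, s, x s) : ℝ × ℝ × ℝ) ∈
                  (Icc (0:ℝ) T₁) ×ˢ (Icc (0:ℝ) T₁) ×ˢ (Icc (-B) B) :=
                ⟨⟨h0t, htT.le⟩, ⟨hs.1, hsT.le⟩, abs_le.1 (hxB s ⟨hs.1, hsT⟩)⟩
              have hq : ((t', s, x s) : ℝ × ℝ × ℝ) ∈
                  (Icc (0:ℝ) T₁) ×ˢ (Icc (0:ℝ) T₁) ×ˢ (Icc (-B) B) :=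
                ⟨⟨h0, ht'T.le⟩, ⟨hs.1, hsT.le⟩, abs_le.1 (hxB s ⟨hs.1, hsT⟩)⟩
              have h5 : dist ((t, s, x s) : ℝ × ℝ × ℝ) ((t', s, x s) : ℝ × ℝ × ℝ)
                  = |t - t'| := by
                simp [Prod.dist_eq, Real.dist_eq, abs_nonneg]
              have h6 : dist ((t, s, x s) : ℝ × ℝ × ℝ) ((t', s, x s) : ℝ × ℝ × ℝ) < δ₁ := by
                rw [h5, abs_of_nonneg (by linarith)]
                exact lt_of_lt_of_le hlt (min_le_left _ _)
              have h7 := hδ₁ _ hp _ hq h6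
              rw [Real.dist_eq] at h7
              exact h7.le
          _ = t' * (ε / (2 * (T₁ + 1))) := by
              rw [intervalIntegral.integral_const]; simp [smul_eq_mul]
          _ ≤ T₁ * (ε / (2 * (T₁ + 1))) :=
              mul_le_mul_of_nonneg_right ht'T.le hε'.le
      have hb2 : |∫ s in t'..t, Kt t s (x s)| ≤ C₁ * (t - t') := by
        calc |∫ s in t'..t, Kt t s (x s)|
            ≤ ∫ s in t'..t, |Kt t s (x s)| := by
              simpa using intervalIntegral.abs_integral_le_integral_abs htt'
                (f := fun s => Kt t s (x s))
          _ ≤ ∫ _s in t'..t, C₁ := by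
              apply intervalIntegral.integral_mono_on htt' hi2.abs intervalIntegrable_const
              intro s hs
              exact hKbd t s (h0.trans hs.1) hs.2 htT
          _ = C₁ * (t - t') := by
              rw [intervalIntegral.integral_const]; simp [smul_eq_mul, mul_comm]
      have hfin1 : T₁ * (ε / (2 * (T₁ + 1))) < ε / 2 := by
        have hq : ε / (2 * (T₁ + 1)) * (2 * (T₁ + 1)) = ε := by
          field_simp
        nlinarith [hε', hT₁pos]
      have hfin2 : C₁ * (t - t') < ε / 2 := by
        have h1 : t - t' < ε / (2 * (C₁ + 1)) := lt_of_lt_of_le hlt (min_le_right _ _)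
        have h2 : 0 ≤ t - t' := by linarith
        have h3 : C₁ * (t - t') ≤ C₁ * (ε / (2 * (C₁ + 1))) :=
          mul_le_mul_of_nonneg_left h1.le hC₁0
        have hq : ε / (2 * (C₁ + 1)) * (2 * (C₁ + 1)) = ε := by
          have : (2 : ℝ) * (C₁ + 1) ≠ 0 := by positivity
          field_simp
        nlinarith [hε, hC₁0]
      calc |x t - x t'| ≤ |∫ s in (0:ℝ)..t', (Kt t s (x s) - Kt t' s (x s))|
            + |∫ s in t'..t, Kt t s (x s)| := by rw [e1]; exact abs_add_le _ _
        _ < ε := by linarith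
    -- x has a limit at T₁
    have hCau : ∃ L : ℝ, Tendsto x (nhdsWithin T₁ (Iio T₁)) (nhds L) := by
      have hc : Cauchy (Filter.map x (nhdsWithin T₁ (Iio T₁))) := by
        rw [Metric.cauchy_iff]
        constructor
        · exact Filter.map_neBot
        · intro ε hε
          obtain ⟨δ, hδ0, hδ⟩ := hinc ε hε
          refine ⟨x '' (Ioo (max 0 (T₁ - δ)) T₁),
            Filter.image_mem_map (Ioo_mem_nhdsLT_of_mem
              ⟨max_lt hT₁pos (by linarith), le_rfl⟩), ?_⟩
          rintro a ⟨ta, hta, rfl⟩ b ⟨tb, htb, rfl⟩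
          have h0a : (0:ℝ) ≤ ta := le_of_lt (lt_of_le_of_lt (le_max_left _ _) hta.1)
          have h0b : (0:ℝ) ≤ tb := le_of_lt (lt_of_le_of_lt (le_max_left _ _) htb.1)
          have hda : T₁ - δ < ta := lt_of_le_of_lt (le_max_right _ _) hta.1
          have hdb : T₁ - δ < tb := lt_of_le_of_lt (le_max_right _ _) htb.1
          rcases le_total ta tb with h | h
          · rw [Real.dist_eq, abs_sub_comm]
            exact hδ ta tb h0a h htb.2 (by linarith [htb.2])
          · rw [Real.dist_eq]
            exact hδ tb ta h0b h hta.2 (by linarith [hta.2])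
      obtain ⟨L, hL⟩ := CompleteSpace.complete hc
      exact ⟨L, hL⟩
    obtain ⟨L, hLx⟩ := hCau
    set Y : ℝ → ℝ := fun t => if t < T₁ then x (max t 0) else L with hYdef
    have hYx : ∀ t ∈ Ico (0:ℝ) T₁, Y t = x t := by
      intro t ht
      rw [hYdef]
      simp only [if_pos ht.2, max_eq_left ht.1]
    have hYT₁ : Y T₁ = L := by rw [hYdef]; simp
    have hYcont : Continuous Y := by
      rw [continuous_iff_continuousAt]
      intro t₀
      rcases lt_trichotomy t₀ T₁ with h | h | h
      · set c := (max t₀ 0 + T₁)/2 with hcdef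
        have hmt₀ : max t₀ 0 < T₁ := max_lt h hT₁pos
        have hc0 : 0 < c := by
          have := le_max_right t₀ 0
          rw [hcdef]; nlinarith [hT₁pos]
        have hcT : c < T₁ := by rw [hcdef]; linarith
        have ht₀c : t₀ < c := by
          have := le_max_left t₀ 0
          rw [hcdef]; linarith
        have hxc : Continuous (fun t => x (max 0 (min t c))) := by
          apply (hxcont.mono (hIcoSub c hcT)).comp_continuous
            (continuous_const.max (continuous_id.min continuous_const))
          intro t
          exact ⟨le_max_left _ _, max_le hc0.le (min_le_right _ _)⟩
        apply hxc.continuousAt.congr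
        filter_upwards [Iio_mem_nhds ht₀c] with t (htc : t < c)
        rw [hYdef]
        simp only [if_pos (htc.trans hcT), min_eq_left htc.le, max_comm]
      · subst h
        rw [← continuousWithinAt_univ]
        rw [show (univ : Set ℝ) = Iio t₀ ∪ Ici t₀ from (Iio_union_Ici).symm]
        apply ContinuousWithinAt.union
        · show Tendsto Y (nhdsWithin t₀ (Iio t₀)) (nhds (Y t₀))
          rw [hYT₁]
          apply Tendsto.congr' _ hLx
          filter_upwards [Ioo_mem_nhdsLT_of_mem
            (show t₀ ∈ Ioc 0 t₀ from ⟨hT₁pos, le_rfl⟩)] with t ht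
          exact (hYx t ⟨ht.1.le, ht.2⟩).symm
        · have hconst : ContinuousWithinAt (fun _ : ℝ => L) (Ici t₀) t₀ :=
            continuousWithinAt_const
          apply hconst.congr
          · intro y hy
            rw [hYdef]
            simp only [if_neg (not_lt.2 (mem_Ici.1 hy))]
          · exact hYT₁
      · apply ContinuousAt.congr (continuousAt_const : ContinuousAt (fun _ : ℝ => L) t₀)
        filter_upwards [Ioi_mem_nhds h] with t (ht : T₁ < t)
        rw [hYdef]
        simp only [if_neg (not_lt.2 ht.le)]
    have hYB : ∀ t : ℝ, |Y t| ≤ B := by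
      intro t
      rcases lt_or_ge t T₁ with h | h
      · rw [hYdef]
        simp only [if_pos h]
        exact hxB _ ⟨le_max_right _ _, max_lt h hT₁pos⟩
      · rw [hYdef]
        simp only [if_neg (not_lt.2 h)]
        have habs : Tendsto (fun t => |x t|) (nhdsWithin T₁ (Iio T₁)) (nhds |L|) := hLx.abs
        apply le_of_tendsto habs
        filter_upwards [Ioo_mem_nhdsLT_of_mem
          (show T₁ ∈ Ioc 0 T₁ from ⟨hT₁pos, le_rfl⟩)] with t ht
        exact hxB t ⟨ht.1.le, ht.2⟩
    have hΦc : Continuous (fun t => ∫ s in (0:ℝ)..t, Kt t s (Y s)) := by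
      apply intervalIntegral.continuous_parametric_intervalIntegral_of_continuous _ continuous_id
      exact hKtc.comp (continuous_fst.prodMk (continuous_snd.prodMk (hYcont.comp continuous_snd)))
    have hYeqIco : ∀ t ∈ Ico (0:ℝ) T₁, Y t = ∫ s in (0:ℝ)..t, Kt t s (Y s) := by
      intro t ht
      rw [hYx t ht, hxeqKt t ht]
      apply intervalIntegral.integral_congr
      intro s hs
      rw [uIcc_of_le ht.1] at hs
      show Kt t s (x s) = Kt t s (Y s)
      rw [hYx s ⟨hs.1, lt_of_le_of_lt hs.2 ht.2⟩]
    have hYeq : ∀ t ∈ Icc (0:ℝ) T₁, Y t = ∫ s in (0:ℝ)..t, Kt t s (Y s) := by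
      intro t ht
      rcases lt_or_eq_of_le ht.2 with h | h
      · exact hYeqIco t ⟨ht.1, h⟩
      · subst h
        have h1 : Tendsto (fun r => ∫ s in (0:ℝ)..r, Kt r s (Y s)) (nhdsWithin t (Iio t))
            (nhds (∫ s in (0:ℝ)..t, Kt t s (Y s))) :=
          (hΦc.tendsto t).mono_left nhdsWithin_le_nhds
        have h2 : Tendsto (fun r => ∫ s in (0:ℝ)..r, Kt r s (Y s)) (nhdsWithin t (Iio t))
            (nhds L) := by
          apply Tendsto.congr' _ hLx
          filter_upwards [Ioo_mem_nhdsLT_of_mem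
            (show t ∈ Ioc 0 t from ⟨hT₁pos, le_rfl⟩)] with r hr
          rw [← hYeqIco r ⟨hr.1.le, hr.2⟩, hYx r ⟨hr.1.le, hr.2⟩]
        rw [hYT₁]
        exact tendsto_nhds_unique h2 h1
    -- truncated kernel on [0, T₁ + 1]
    have hA0 : (0:ℝ) ≤ T₁ + 1 := by linarith
    have hR0 : (0:ℝ) ≤ B + 1 := by linarith
    obtain ⟨hKCc, hKCb, hKCl⟩ := hKC (T₁ + 1) (B + 1) hA0 hR0
    have hCpos : 0 ≤ m (T₁ + 1) * γ (B + 1) :=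
      mul_nonneg (hmpos _ (mem_Ici.2 hA0)).le (hγnonneg _ hR0)
    have hΛpos : 0 ≤ m (T₁ + 1) * γ' (B + 1) :=
      mul_nonneg (hmpos _ (mem_Ici.2 hA0)).le (hγ'nonneg _ hR0)
    obtain ⟨z, hzc, hzeq⟩ := volterra_exists
      (fun t s v => Kt (min t (T₁ + 1)) (min s (T₁ + 1)) (clamp (B + 1) v)) _ _
      hCpos hΛpos hKCc hKCb hKCl
    have hzY : EqOn z Y (Icc 0 T₁) := by
      apply volterra_unique
        (fun t s v => Kt (min t (T₁ + 1)) (min s (T₁ + 1)) (clamp (B + 1) v))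
        T₁ (m (T₁ + 1) * γ' (B + 1)) hT₁pos.le hΛpos z Y
        hzc.continuousOn hYcont.continuousOn
      · intro t _
        exact (hKCc.comp (continuous_const.prodMk (continuous_id.prodMk hzc))).continuousOn
      · intro t _
        exact (hKCc.comp (continuous_const.prodMk (continuous_id.prodMk hYcont))).continuousOn
      · intro t _ s _
        exact hKCl t s (z s) (Y s)
      · intro t htIcc
        exact hzeq t htIcc.1
      · intro t htIcc
        rw [hYeq t htIcc]
        apply intervalIntegral.integral_congr
        intro s hs
        rw [uIcc_of_le htIcc.1] at hs
        show Kt t s (Y s) = Kt (min t (T₁ + 1)) (min s (T₁ + 1)) (clamp (B + 1) (Y s))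
        rw [min_eq_left (by linarith [htIcc.2] : t ≤ T₁ + 1),
          min_eq_left (by linarith [hs.2.trans htIcc.2] : s ≤ T₁ + 1),
          hclamp_eq (B + 1) (Y s) ((hYB s).trans (by linarith))]
    have hzT₁ : |z T₁| ≤ B := by
      rw [hzY ⟨hT₁pos.le, le_rfl⟩]
      exact hYB T₁
    obtain ⟨δ, hδ0, hδ1, hδR⟩ : ∃ δ : ℝ, 0 < δ ∧ δ ≤ 1 ∧
        ∀ t : ℝ, |t - T₁| < δ → |z t| < B + 1 := by
      have hc : Tendsto (fun t => |z t|) (nhds T₁) (nhds |z T₁|) := (hzc.abs).tendsto T₁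
      have hev : (fun t => |z t|) ⁻¹' (Iio (B + 1)) ∈ nhds T₁ :=
        hc (Iio_mem_nhds (lt_of_le_of_lt hzT₁ (by linarith)))
      obtain ⟨ε, hε0, hball⟩ := Metric.mem_nhds_iff.1 hev
      refine ⟨min (ε/2) 1, lt_min (by linarith) one_pos, min_le_right _ _, ?_⟩
      intro t ht
      apply hball
      rw [Metric.mem_ball, Real.dist_eq]
      have := lt_of_lt_of_le ht (min_le_left _ _)
      linarith
    refine Or.inl ⟨T₁ + δ/2, by linarith, z, hzc.continuousOn, ?_, ?_⟩
    · intro t ht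
      rw [hzY ⟨ht.1, ht.2.le⟩, hYx t ht]
    · intro t ht
      have htA : t ≤ T₁ + 1 := by
        have := ht.2; linarith
      have hzb : ∀ s : ℝ, 0 ≤ s → s ≤ t → |z s| ≤ B + 1 := by
        intro s h0 hst
        rcases le_or_gt s T₁ with hsT | hsT
        · rw [hzY ⟨h0, hsT⟩]
          exact (hYB s).trans (by linarith)
        · apply (hδR s _).le
          rw [abs_of_pos (by linarith)]
          have := hst.trans_lt ht.2
          linarith
      rw [hzeq t ht.1]
      apply intervalIntegral.integral_congr
      intro s hs
      rw [uIcc_of_le ht.1] at hs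
      show Kt (min t (T₁ + 1)) (min s (T₁ + 1)) (clamp (B + 1) (z s)) = K t s (z s)
      rw [min_eq_left htA, min_eq_left (hs.2.trans htA),
        hclamp_eq (B + 1) (z s) (hzb s hs.1 hs.2), hKteq t s (z s) hs.1 hs.2]
  · -- unbounded : the solution itself blows up at T₁
    push_neg at hbd
    have hutop : Tendsto u (nhdsWithin T₁ (Iio T₁)) atTop := by
      rw [tendsto_atTop]
      intro R
      obtain ⟨t₀, ht₀, hRt₀⟩ := hbd R
      filter_upwards [Ioo_mem_nhdsLT_of_mem (show T₁ ∈ Ioc t₀ T₁ from ⟨ht₀.2, le_rfl⟩)]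
        with t htmem
      exact le_trans hRt₀.le (humono t₀ t ht₀.1 htmem.1.le htmem.2)
    have hucont : ∀ b : ℝ, 0 ≤ b → b < T₁ → ContinuousOn u (Icc 0 b) := by
      intro b hb0 hbT
      rw [show Icc (0:ℝ) b = uIcc 0 b from (uIcc_of_le hb0).symm]
      apply intervalIntegral.continuousOn_primitive_interval
      rw [uIcc_of_le hb0]
      exact (hρxcont.mono (hIcoSub b hbT)).integrableOn_Icc
    have hF3d : ∀ t ∈ Ioo (0:ℝ) T₁, HasDerivAt (fun r => M r - G (u r))
        (m (max t 0) - 1 / γ (max (u t) 0) * ρx t) t :=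
      fun t ht => (hMd t).sub ((hGd (u t)).comp t (hud t ht))
    have hF3mono : ∀ b : ℝ, 0 < b → b < T₁ →
        MonotoneOn (fun r => M r - G (u r)) (Icc 0 b) := by
      intro b hb0 hbT
      apply monotoneOn_of_deriv_nonneg (convex_Icc 0 b)
        (show ContinuousOn (fun r => M r - G (u r)) (Icc 0 b) from
          (hMc.continuousOn.sub (hGc.comp_continuousOn (hucont b hb0.le hbT))))
      · intro t ht
        rw [interior_Icc] at ht
        exact (hF3d t ⟨ht.1, ht.2.trans hbT⟩).differentiableAt.differentiableWithinAt
      · intro t ht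
        rw [interior_Icc] at ht
        have ht' : t ∈ Ioo (0:ℝ) T₁ := ⟨ht.1, ht.2.trans hbT⟩
        have htIco : t ∈ Ico (0:ℝ) T₁ := ⟨ht.1.le, ht'.2⟩
        rw [(hF3d t ht').deriv, max_eq_left ht.1.le, max_eq_left (hunonneg t htIco)]
        have hγu : 0 < γ (u t) := hγpos _ (mem_Ici.2 (hunonneg t htIco))
        have hρle : ρx t ≤ m t * γ (u t) := by
          rw [hρxdef]
          apply mul_le_mul_of_nonneg_left _ (hmpos t (mem_Ici.2 ht.1.le)).le
          exact hγmono (mem_Ici.2 (abs_nonneg _)) (mem_Ici.2 (hunonneg t htIco))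
            (hxleu t htIco)
        rw [sub_nonneg, one_div]
        calc (γ (u t))⁻¹ * ρx t ≤ (γ (u t))⁻¹ * (m t * γ (u t)) :=
              mul_le_mul_of_nonneg_left hρle (inv_nonneg.2 hγu.le)
          _ = m t := by field_simp
    have hF3lim : Tendsto (fun r => M r - G (u r)) (nhdsWithin T₁ (Iio T₁)) (nhds 0) := by
      have h1 : Tendsto M (nhdsWithin T₁ (Iio T₁)) (nhds l) := by
        rw [← hMT]
        exact (hMc.tendsto T₁).mono_left nhdsWithin_le_nhds
      have h2 : Tendsto (fun r => G (u r)) (nhdsWithin T₁ (Iio T₁)) (nhds l) :=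
        hGtop.comp hutop
      simpa using h1.sub h2
    have hGuxh : ∀ t ∈ Ico (0:ℝ) T₁, u t = xh t := by
      intro t ht
      have hge : 0 ≤ M t - G (u t) := by
        rcases eq_or_lt_of_le ht.1 with h0 | h0
        · rw [← h0, hM0, hu0, hG0, sub_zero]
        · have h := hF3mono t h0 ht.2 ⟨le_rfl, ht.1⟩ ⟨ht.1, le_rfl⟩ ht.1
          simp only [hM0, hu0, hG0, sub_zero] at h
          exact h
      have hle : M t - G (u t) ≤ 0 := by
        apply ge_of_tendsto hF3lim
        filter_upwards [Ioo_mem_nhdsLT_of_mem (show T₁ ∈ Ioc t T₁ from ⟨ht.2, le_rfl⟩)]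
          with r hr
        exact hF3mono r (lt_of_le_of_lt ht.1 hr.1) hr.2 ⟨ht.1, hr.1.le⟩
          ⟨ht.1.trans hr.1.le, le_rfl⟩ hr.1.le
      have h1 : G (u t) = M t := by linarith
      rw [← hxhG t ht.2] at h1
      exact hGmono.injective h1
    have hγeq : ∀ t ∈ Ioo (0:ℝ) T₁, γ |x t| = γ (xh t) := by
      intro t ht
      have hud2 : HasDerivAt u (γ (max (xh t) 0) * m (max t 0)) t := by
        apply (hxhd t ht.2).congr_of_eventuallyEq
        filter_upwards [IsOpen.mem_nhds isOpen_Ioo ht] with r hr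
        exact hGuxh r ⟨hr.1.le, hr.2⟩
      have heq := (hud t ht).unique hud2
      rw [max_eq_left ht.1.le, max_eq_left (hxhpos t ht.1.le ht.2)] at heq
      have hmt : m t ≠ 0 := (hmpos t (mem_Ici.2 ht.1.le)).ne'
      have heq2 : m t * γ |x t| = m t * γ (xh t) := by
        have h3 : ρx t = m t * γ |x t| := rfl
        rw [h3] at heq
        linarith
      exact mul_left_cancel₀ hmt heq2
    have hxtop : Tendsto (fun t => |x t|) (nhdsWithin T₁ (Iio T₁)) atTop := by
      rw [tendsto_atTop]
      intro R
      obtain ⟨Y, hY0, hYR⟩ := hγunbdd (max R 0)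
      have hev1 : ∀ᶠ t in nhdsWithin T₁ (Iio T₁), Y < xh t :=
        hxhtop.eventually (eventually_gt_atTop Y)
      filter_upwards [hev1,
        Ioo_mem_nhdsLT_of_mem (show T₁ ∈ Ioc 0 T₁ from ⟨hT₁pos, le_rfl⟩)] with t hY ht
      by_contra hcon
      push_neg at hcon
      have h1 : γ |x t| ≤ γ (max R 0) :=
        hγmono (mem_Ici.2 (abs_nonneg _)) (mem_Ici.2 (le_max_right _ _))
          (le_trans hcon.le (le_max_left _ _))
      have h2 : γ Y ≤ γ (xh t) :=
        hγmono (mem_Ici.2 hY0) (mem_Ici.2 (hxhpos t ht.1.le ht.2)) hY.le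
      rw [hγeq t ht] at h1
      linarith
    exact Or.inr ⟨T₁, le_rfl, x, hxcont, fun _ _ => rfl, hxeqK, hxtop⟩
end
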